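/- arXiv:1803.08081 — 6 statements merged into one kernel-verified Lean document; each statement's English description precedes it below -/
import Mathlib

section
/- Almost surely, the set of original ancestors {m ∈ ℤ : N_m = 1} = {m ∈ ℤ : a_{m-i} ≤ i for all i ≥ 1} is infinite; in fact it is almost surely unbounded above and unbounded below in ℤ. -/
open MeasureTheory ProbabilityTheory Filter
open scoped ENNReal

/-!
Write `A m` for the event that `m` is an original ancestor. By independence,
`P (A m) ≥ ∏_{i < I} P (a₀ ≤ i + 1) · (1 - ∑_{i > I} P (a₀ > i))`, and since `E a₀ < ∞` the tail
sum is below `1` for large `I`; so `P (A m) ≥ δ > 0` uniformly in `m`, and `limsup A` has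
probability at least `δ` in both directions.

As `m → -∞`, `A m` only involves `a_k` for `k < m`, so `limsup_{m → -∞} A m` is a tail event
and Kolmogorov's 0-1 law makes it almost sure. As `m → +∞` this fails, since `A m` involves the
whole past. Ignoring the individuals born before `K` gives events `A_K m` depending on `a_k`,
`K ≤ k < m` only, and `⋃ K, limsup_{m → ∞} A_K m` is a tail event, hence almost sure. By
Borel–Cantelli `a_{-j} ≤ j` for all large `j`, so the individuals born before `K` all die
by some finite time `S`, and `A_K m` implies `A m` for `m > S`.
-/

section LimsupMeasure

variable {Ω ι : Type*} [MeasurableSpace Ω] {μ : Measure Ω} [IsFiniteMeasure μ] [Countable ι]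
  [Preorder ι] [Nonempty ι] {s : ι → Set Ω} {δ : ℝ≥0∞}

theorem le_measure_limsup_atTop [IsDirectedOrder ι] (hs : ∀ i, MeasurableSet (s i))
    (hδ : ∀ i, δ ≤ μ (s i)) : δ ≤ μ (limsup s atTop) := by
  have hanti : Antitone fun i => ⋃ j ≥ i, s j := fun i i' hii' =>
    Set.biUnion_subset_biUnion_left fun j (hj : i' ≤ j) => hii'.trans hj
  rw [atTop_basis.limsup_eq_iInf_iSup]
  simp only [iInf_true, Set.mem_Ici, Set.iInf_eq_iInter, Set.iSup_eq_iUnion]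
  rw [hanti.measure_iInter (fun i => (MeasurableSet.biUnion (Set.to_countable _)
    fun j _ => hs j).nullMeasurableSet) ⟨Classical.arbitrary ι, measure_ne_top _ _⟩]
  exact le_iInf fun i => (hδ i).trans (measure_mono (Set.subset_biUnion_of_mem le_rfl))

theorem le_measure_limsup_atBot [IsCodirectedOrder ι] (hs : ∀ i, MeasurableSet (s i))
    (hδ : ∀ i, δ ≤ μ (s i)) : δ ≤ μ (limsup s atBot) :=
  have : Countable ιᵒᵈ := ‹Countable ι›
  le_measure_limsup_atTop (ι := ιᵒᵈ) hs hδ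

end LimsupMeasure

section TailEvents

variable {Ω ι : Type*} {s : ι → MeasurableSpace Ω} {t : Set Ω}

theorem measurableSet_limsup_atTop_iff [Preorder ι] [IsDirectedOrder ι] [Nonempty ι] :
    MeasurableSet[limsup s atTop] t ↔ ∀ N, MeasurableSet[⨆ n ≥ N, s n] t := by
  rw [atTop_basis.limsup_eq_iInf_iSup]
  simp only [MeasurableSpace.measurableSet_iInf, forall_const]
  rfl

theorem measurableSet_limsup_atBot_iff [Preorder ι] [IsCodirectedOrder ι] [Nonempty ι] :
    MeasurableSet[limsup s atBot] t ↔ ∀ N, MeasurableSet[⨆ n ≤ N, s n] t := by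
  rw [atBot_basis.limsup_eq_iInf_iSup]
  simp only [MeasurableSpace.measurableSet_iInf, forall_const]
  rfl

variable {mΩ : MeasurableSpace Ω} {μ : Measure Ω} [IsProbabilityMeasure μ]

theorem ae_mem_of_measurableSet_limsup_atTop [SemilatticeSup ι] [NoMaxOrder ι] [Nonempty ι]
    (h_le : ∀ n, s n ≤ mΩ) (h_indep : iIndep s μ) (ht : MeasurableSet[limsup s atTop] t)
    (h0 : μ t ≠ 0) : ∀ᵐ ω ∂μ, ω ∈ t := by
  have ht' : MeasurableSet[mΩ] t := (limsup_le_iSup.trans (iSup_le h_le)) t ht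
  have h01 := measure_zero_or_one_of_measurableSet_limsup_atTop h_le h_indep ht
  exact (mem_ae_iff_prob_eq_one ht').2 (h01.resolve_left h0)

theorem ae_mem_of_measurableSet_limsup_atBot [SemilatticeInf ι] [NoMinOrder ι] [Nonempty ι]
    (h_le : ∀ n, s n ≤ mΩ) (h_indep : iIndep s μ) (ht : MeasurableSet[limsup s atBot] t)
    (h0 : μ t ≠ 0) : ∀ᵐ ω ∂μ, ω ∈ t := by
  have ht' : MeasurableSet[mΩ] t := (limsup_le_iSup.trans (iSup_le h_le)) t ht
  have h01 := measure_zero_or_one_of_measurableSet_limsup_atBot h_le h_indep ht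
  exact (mem_ae_iff_prob_eq_one ht').2 (h01.resolve_left h0)

end TailEvents

theorem prod_mul_one_sub_tsum_le_measure_iInter {Ω : Type*} {mΩ : MeasurableSpace Ω}
    {μ : Measure Ω} [IsProbabilityMeasure μ] {s : ℕ → MeasurableSpace Ω}
    (h_le : ∀ i, s i ≤ mΩ) (h_indep : iIndep s μ) {E : ℕ → Set Ω}
    (hE : ∀ i, MeasurableSet[s i] (E i)) (I : ℕ) :
    (∏ i ∈ Finset.range I, μ (E i)) * (1 - ∑' i, μ (E (i + I))ᶜ) ≤ μ (⋂ i, E i) := by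
  set C := ⋂ i ∈ Finset.range I, E i
  set D := ⋂ i, E (i + I)
  have hCD : ⋂ i, E i = C ∩ D := by
    ext ω
    simp only [C, D, Set.mem_iInter, Set.mem_inter_iff, Finset.mem_range]
    refine ⟨fun h => ⟨fun i _ => h i, fun i => h (i + I)⟩, fun ⟨hC, hD⟩ i => ?_⟩
    rcases lt_or_ge i I with hi | hi
    · exact hC i hi
    · simpa [Nat.sub_add_cancel hi] using hD (i - I)
  have hC : MeasurableSet[⨆ i ∈ Set.Iio I, s i] C :=
    Finset.measurableSet_biInter _ fun i hi =>
      le_iSup₂ (f := fun j (_ : j ∈ Set.Iio I) => s j) i (Finset.mem_range.1 hi) _ (hE i)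
  have hD : MeasurableSet[⨆ i ∈ Set.Ici I, s i] D :=
    .iInter fun i =>
      le_iSup₂ (f := fun j (_ : j ∈ Set.Ici I) => s j) (i + I) (Nat.le_add_left I i) _ (hE _)
  have hCD_indep : μ (C ∩ D) = μ C * μ D :=
    (Indep_iff _ _ _).1 (indep_iSup_of_disjoint h_le h_indep (Set.Iio_disjoint_Ici le_rfl))
      C D hC hD
  have hD_ge : 1 - ∑' i, μ (E (i + I))ᶜ ≤ μ D := by
    have hDm : MeasurableSet D := iSup₂_le (fun i _ => h_le i) D hD
    calc 1 - ∑' i, μ (E (i + I))ᶜ ≤ 1 - μ Dᶜ := by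
          gcongr
          rw [Set.compl_iInter]
          exact measure_iUnion_le _
      _ = μ D := by rw [← prob_compl_eq_one_sub hDm.compl, compl_compl]
  rw [hCD, hCD_indep, h_indep.meas_biInter fun i _ => hE i]
  gcongr

theorem tsum_measure_lt_eq_lintegral {Ω : Type*} [MeasurableSpace Ω] {μ : Measure Ω}
    {X : Ω → ℕ} (hX : Measurable X) : ∑' i : ℕ, μ {ω | i < X ω} = ∫⁻ ω, X ω ∂μ := by
  have hcount : ∀ n : ℕ, ∑' i : ℕ, {j : ℕ | i < j}.indicator (1 : ℕ → ℝ≥0∞) n = n := by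
    intro n
    rw [tsum_eq_sum (s := Finset.range n) fun i hi => by simp_all [Set.indicator]]
    simp only [Set.indicator, Set.mem_ofPred_eq, Pi.one_apply]
    rw [Finset.sum_boole, Finset.filter_true_of_mem fun i hi => Finset.mem_range.1 hi,
      Finset.card_range]
  have hm : ∀ i : ℕ, MeasurableSet {ω | i < X ω} := fun i => hX measurableSet_Ioi
  simp_rw [← lintegral_indicator_one (hm _)]
  rw [← lintegral_tsum fun i => (measurable_one.indicator (hm i)).aemeasurable]
  congr 1 with ω
  exact hcount (X ω)

theorem bddAbove_image_add_Iio {b : ℤ → ℕ} (hb : ∀ᶠ j : ℕ in atTop, b (-j) ≤ j) (K : ℤ) :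
    BddAbove ((fun n => (b n : ℤ) + n) '' Set.Iio K) := by
  obtain ⟨J, hJ⟩ := eventually_atTop.1 hb
  have hsub : Set.Iio K ⊆ Set.Iic (-J : ℤ) ∪ Set.Ico (-J : ℤ) K := fun n hn => by
    simp only [Set.mem_union, Set.mem_Iic, Set.mem_Ico, Set.mem_Iio] at hn ⊢
    omega
  have hpast : BddAbove ((fun n => (b n : ℤ) + n) '' Set.Iic (-J : ℤ)) := by
    refine ⟨0, ?_⟩
    rintro _ ⟨n, hn : n ≤ -J, rfl⟩
    have := hJ (-n).toNat (by omega)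
    rw [show -((-n).toNat : ℤ) = n by omega] at this
    simp only
    omega
  refine BddAbove.mono (Set.image_mono hsub) ?_
  rw [Set.image_union]
  exact hpast.union ((Set.finite_Ico _ _).image _).bddAbove

section OriginalAncestors

variable {Ω : Type*} {a : ℤ → Ω → ℕ}

/-- The event `N_m = 1`. -/
def ancestorEvent (a : ℤ → Ω → ℕ) (m : ℤ) : Set Ω :=
  {ω | ∀ i : ℕ, 1 ≤ i → a (m - i) ω ≤ i}

/-- The event `N_m = 1` for the population in which the individuals born before `K` are
removed. -/
def ancestorEventFrom (a : ℤ → Ω → ℕ) (K m : ℤ) : Set Ω :=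
  {ω | ∀ i : ℕ, 1 ≤ i → K ≤ m - i → a (m - i) ω ≤ i}

theorem ancestorEvent_eq_iInter (m : ℤ) :
    ancestorEvent a m = ⋂ i : ℕ, a (m - (i + 1 : ℕ)) ⁻¹' Set.Iic (i + 1) := by
  ext ω
  simp only [ancestorEvent, Set.mem_ofPred_eq, Set.mem_iInter, Set.mem_preimage, Set.mem_Iic]
  refine ⟨fun h i => h (i + 1) (Nat.le_add_left 1 i), fun h i hi => ?_⟩
  obtain ⟨j, rfl⟩ := Nat.exists_eq_add_of_le' hi
  exact h j

theorem ancestorEventFrom_mono {K K' : ℤ} (hK : K ≤ K') (m : ℤ) :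
    ancestorEventFrom a K m ⊆ ancestorEventFrom a K' m :=
  fun _ hω i hi hK' => hω i hi (hK.trans hK')

theorem limsup_ancestorEvent_subset_iUnion_limsup_ancestorEventFrom :
    limsup (ancestorEvent a) atTop ⊆ ⋃ K, limsup (ancestorEventFrom a K) atTop := by
  intro ω hω
  refine Set.mem_iUnion.2 ⟨0, mem_limsup_iff_frequently_mem.2 ?_⟩
  exact (mem_limsup_iff_frequently_mem.1 hω).mono fun m hm i hi _ => hm i hi

theorem frequently_mem_ancestorEvent {K : ℤ} {ω : Ω}
    (hpast : BddAbove ((fun n => (a n ω : ℤ) + n) '' Set.Iio K))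
    (h : ∃ᶠ m in atTop, ω ∈ ancestorEventFrom a K m) :
    ∃ᶠ m in atTop, ω ∈ ancestorEvent a m := by
  obtain ⟨S, hS⟩ := hpast
  refine h.mp ((eventually_gt_atTop S).mono fun m hm hω i hi => ?_)
  rcases le_or_gt K (m - i) with hK | hK
  · exact hω i hi hK
  · have := hS ⟨m - i, hK, rfl⟩
    simp only at this
    omega

variable (a) in
theorem measurableSet_preimage_iSup {p : ℤ → Prop} {k : ℤ} (hk : p k) (t : Set ℕ) :
    MeasurableSet[⨆ n, ⨆ (_ : p n), MeasurableSpace.comap (a n) inferInstance] (a k ⁻¹' t) :=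
  le_iSup₂ (f := fun n (_ : p n) => MeasurableSpace.comap (a n) inferInstance) k hk _
    ⟨t, .of_discrete, rfl⟩

theorem measurableSet_ancestorEvent_iSup {p : ℤ → Prop} {m : ℤ} (hp : ∀ k < m, p k) :
    MeasurableSet[⨆ n, ⨆ (_ : p n), MeasurableSpace.comap (a n) inferInstance]
      (ancestorEvent a m) := by
  rw [ancestorEvent_eq_iInter]
  exact .iInter fun i => measurableSet_preimage_iSup a (hp _ (by omega)) _

theorem measurableSet_ancestorEventFrom_iSup {p : ℤ → Prop} {K m : ℤ} (hp : ∀ k ≥ K, p k) :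
    MeasurableSet[⨆ n, ⨆ (_ : p n), MeasurableSpace.comap (a n) inferInstance]
      (ancestorEventFrom a K m) := by
  have : ancestorEventFrom a K m =
      ⋂ (i : ℕ) (_ : 1 ≤ i) (_ : K ≤ m - i), a (m - i) ⁻¹' Set.Iic i := by
    ext ω
    simp [ancestorEventFrom]
  rw [this]
  exact .iInter fun i => .iInter fun _ => .iInter fun hK =>
    measurableSet_preimage_iSup a (hp _ hK) _

theorem measurableSet_limsup_ancestorEvent_atBot :
    MeasurableSet[limsup (fun n => MeasurableSpace.comap (a n) inferInstance) atBot]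
      (limsup (ancestorEvent a) atBot) := by
  refine measurableSet_limsup_atBot_iff.2 fun N => ?_
  rw [(atBot_basis' N).limsup_eq_iInf_iSup]
  simp only [Set.iInf_eq_iInter, Set.iSup_eq_iUnion, Set.mem_Iic]
  exact .iInter fun M => .iInter fun hM => .iUnion fun m => .iUnion fun hm =>
    measurableSet_ancestorEvent_iSup fun k hk => by omega

theorem measurableSet_iUnion_limsup_ancestorEventFrom_atTop :
    MeasurableSet[limsup (fun n => MeasurableSpace.comap (a n) inferInstance) atTop]
      (⋃ K, limsup (ancestorEventFrom a K) atTop) := by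
  refine measurableSet_limsup_atTop_iff.2 fun N => ?_
  have : ⋃ K, limsup (ancestorEventFrom a K) atTop =
      ⋃ K, limsup (ancestorEventFrom a (max K N)) atTop := by
    ext ω
    simp only [Set.mem_iUnion, mem_limsup_iff_frequently_mem]
    exact ⟨fun ⟨K, hK⟩ => ⟨K, hK.mono fun m hm => ancestorEventFrom_mono (le_max_left K N) m hm⟩,
      fun ⟨K, hK⟩ => ⟨_, hK⟩⟩
  rw [this]
  refine .iUnion fun K => ?_
  rw [atTop_basis.limsup_eq_iInf_iSup]
  simp only [Set.iInf_eq_iInter, Set.iSup_eq_iUnion]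
  exact .iInter fun M => .iInter fun _ => .iUnion fun m => .iUnion fun _ =>
    measurableSet_ancestorEventFrom_iSup fun k hk => (le_max_right K N).trans hk

variable [MeasurableSpace Ω] {P : Measure Ω}

theorem measurableSet_ancestorEvent (hmeas : ∀ n, Measurable (a n)) (m : ℤ) :
    MeasurableSet (ancestorEvent a m) := by
  rw [ancestorEvent_eq_iInter]
  exact .iInter fun i => hmeas _ measurableSet_Iic

theorem exists_pos_le_measure_ancestorEvent [IsProbabilityMeasure P]
    (hmeas : ∀ n, Measurable (a n)) (hindep : iIndepFun a P)
    (hid : ∀ n, IdentDistrib (a n) (a 0) P P) (htail : ∑' i : ℕ, P {ω | i < a 0 ω} ≠ ∞)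
    (h1 : 0 < P {ω | a 0 ω = 1}) :
    ∃ δ, 0 < δ ∧ ∀ m, δ ≤ P (ancestorEvent a m) := by
  obtain ⟨I, hI⟩ : ∃ I : ℕ, ∑' i : ℕ, P (a 0 ⁻¹' Set.Ioi (i + I + 1)) < 1 :=
    (((ENNReal.tendsto_sum_nat_add _ htail).comp (tendsto_add_atTop_nat 1)).eventually
      (gt_mem_nhds one_pos)).exists
  refine ⟨(∏ i ∈ Finset.range I, P (a 0 ⁻¹' Set.Iic (i + 1))) *
    (1 - ∑' i : ℕ, P (a 0 ⁻¹' Set.Ioi (i + I + 1))), ?_, fun m => ?_⟩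
  · refine ENNReal.mul_pos (Finset.prod_ne_zero_iff.2 fun i _ => ?_) (tsub_pos_of_lt hI).ne'
    exact (h1.trans_le (measure_mono fun ω (hω : a 0 ω = 1) =>
      show a 0 ω ≤ i + 1 by omega)).ne'
  have hg : Function.Injective fun i : ℕ => m - (i + 1 : ℕ) := fun i j h => by
    simp only [sub_right_inj, Nat.cast_inj] at h
    omega
  have key := prod_mul_one_sub_tsum_le_measure_iInter (fun i => (hmeas _).comap_le)
    (hindep.iIndep.precomp hg) (E := fun i => a (m - (i + 1 : ℕ)) ⁻¹' Set.Iic (i + 1))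
    (fun i => ⟨_, measurableSet_Iic, rfl⟩) I
  rw [ancestorEvent_eq_iInter]
  convert key using 3
  · exact ((hid _).measure_mem_eq measurableSet_Iic).symm
  · refine tsum_congr fun i => ?_
    rw [← Set.preimage_compl, Set.compl_Iic]
    exact ((hid _).measure_mem_eq measurableSet_Ioi).symm

theorem ae_eventually_le_neg (hid : ∀ n, IdentDistrib (a n) (a 0) P P)
    (htail : ∑' i : ℕ, P {ω | i < a 0 ω} ≠ ∞) :
    ∀ᵐ ω ∂P, ∀ᶠ j : ℕ in atTop, a (-j) ω ≤ j := by
  have hsum : ∑' j : ℕ, P (a (-j) ⁻¹' Set.Ioi j) ≠ ∞ := by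
    rwa [tsum_congr fun j => (hid _).measure_mem_eq measurableSet_Ioi]
  filter_upwards [ae_eventually_notMem hsum] with ω hω
  exact hω.mono fun j hj => not_lt.1 hj

end OriginalAncestors

theorem original_ancestors_infinite_unbounded_general
    {Ω : Type*} [MeasurableSpace Ω] (P : Measure Ω) [IsProbabilityMeasure P]
    (a : ℤ → Ω → ℕ) (hmeas : ∀ n, Measurable (a n))
    (hindep : iIndepFun a P)
    (hident : ∀ n, Measure.map (a n) P = Measure.map (a 0) P)
    (hmean : ∫⁻ ω, (a 0 ω : ℝ≥0∞) ∂P < ⊤)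
    (h1 : 0 < P {ω | a 0 ω = 1}) :
    ∀ᵐ ω ∂P,
      Set.Infinite {m : ℤ | ∀ i : ℕ, 1 ≤ i → a (m - (i : ℤ)) ω ≤ i} ∧
      (∀ M : ℤ, ∃ m : ℤ, M < m ∧ ∀ i : ℕ, 1 ≤ i → a (m - (i : ℤ)) ω ≤ i) ∧
      (∀ M : ℤ, ∃ m : ℤ, m < M ∧ ∀ i : ℕ, 1 ≤ i → a (m - (i : ℤ)) ω ≤ i) := by
  have h_le : ∀ n, MeasurableSpace.comap (a n) inferInstance ≤ ‹MeasurableSpace Ω› :=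
    fun n => (hmeas n).comap_le
  have hid : ∀ n, IdentDistrib (a n) (a 0) P P :=
    fun n => ⟨(hmeas n).aemeasurable, (hmeas 0).aemeasurable, hident n⟩
  have htail : ∑' i : ℕ, P {ω | i < a 0 ω} ≠ ∞ :=
    ((tsum_measure_lt_eq_lintegral (hmeas 0)).trans_lt hmean).ne
  obtain ⟨δ, hδ, hA⟩ := exists_pos_le_measure_ancestorEvent hmeas hindep hid htail h1
  have hAm := measurableSet_ancestorEvent hmeas
  have hbelow : ∀ᵐ ω ∂P, ω ∈ limsup (ancestorEvent a) atBot :=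
    ae_mem_of_measurableSet_limsup_atBot h_le hindep.iIndep
      measurableSet_limsup_ancestorEvent_atBot (hδ.trans_le (le_measure_limsup_atBot hAm hA)).ne'
  have habove : ∀ᵐ ω ∂P, ω ∈ ⋃ K, limsup (ancestorEventFrom a K) atTop :=
    ae_mem_of_measurableSet_limsup_atTop h_le hindep.iIndep
      measurableSet_iUnion_limsup_ancestorEventFrom_atTop (hδ.trans_le
        ((le_measure_limsup_atTop hAm hA).trans
          (measure_mono limsup_ancestorEvent_subset_iUnion_limsup_ancestorEventFrom))).ne'
  filter_upwards [hbelow, habove, ae_eventually_le_neg hid htail] with ω hbelow habove hpast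
  obtain ⟨K, hK⟩ := Set.mem_iUnion.1 habove
  have hup := frequently_mem_ancestorEvent (bddAbove_image_add_Iio hpast K)
    (mem_limsup_iff_frequently_mem.1 hK)
  refine ⟨Set.infinite_of_forall_exists_gt fun M => ?_, frequently_atTop'.1 hup,
    frequently_atBot'.1 (mem_limsup_iff_frequently_mem.1 hbelow)⟩
  obtain ⟨m, hMm, hm⟩ := frequently_atTop'.1 hup M
  exact ⟨m, hm, hMm⟩

/-- Almost surely, the set of original ancestors
`{m ∈ ℤ : N_m = 1} = {m ∈ ℤ : a_{m-i} ≤ i for all i ≥ 1}` is infinite; in fact it is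
almost surely unbounded above and unbounded below in `ℤ`. -/
theorem original_ancestors_infinite_unbounded
    {Ω : Type*} [MeasurableSpace Ω] (P : Measure Ω) [IsProbabilityMeasure P]
    (a : ℤ → Ω → ℕ) (hmeas : ∀ n, Measurable (a n)) (hpos : ∀ n ω, 1 ≤ a n ω)
    (hindep : iIndepFun a P)
    (hident : ∀ n, Measure.map (a n) P = Measure.map (a 0) P)
    (hmean : ∫⁻ ω, (a 0 ω : ℝ≥0∞) ∂P < ⊤)
    (h1 : 0 < P {ω | a 0 ω = 1}) :
    ∀ᵐ ω ∂P,
      Set.Infinite {m : ℤ | ∀ i : ℕ, 1 ≤ i → a (m - (i : ℤ)) ω ≤ i} ∧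
      (∀ M : ℤ, ∃ m : ℤ, M < m ∧ ∀ i : ℕ, 1 ≤ i → a (m - (i : ℤ)) ω ≤ i) ∧
      (∀ M : ℤ, ∃ m : ℤ, m < M ∧ ∀ i : ℕ, 1 ≤ i → a (m - (i : ℤ)) ω ≤ i) :=
  original_ancestors_infinite_unbounded_general P a hmeas hindep hident hmean h1
end

section
/- For every t ∈ ℝ, the moment generating function of N_0 satisfies E[e^{t N_0}] = e^t · ∏_{i=1}^∞ ( e^t ℙ[a_0 > i] + ℙ[a_0 ≤ i] ), and moreover E[e^{t N_0}] < ∞ for all t ∈ ℝ (so N_0 is light-tailed regardless of the distribution of a_0). -/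
/-!
Write `N₀ = 1 + ∑_{i ≥ 1} 1{a_{-i} > i}`. The summands are independent, so the truncation
`N₀^I` to `i ≤ I` has `E[e^{t N₀^I}] = e^t ∏_{i ≤ I} (e^t p_i + 1 - p_i)` with `p_i = ℙ[a₀ > i]`.
Since `∑ p_i = E[a₀] < ∞`, Borel–Cantelli gives `N₀^I = N₀` for all large `I` almost surely, and
monotone (`t ≥ 0`) or dominated (`t ≤ 0`) convergence passes to the limit. Finiteness follows
from `1 + x ≤ eˣ`, which bounds every partial product by `e^t exp(e^t E[a₀])`.
-/

open MeasureTheory ProbabilityTheory Filter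
open scoped ENNReal

/-- The population size at time `0`: `N₀ = 1 + #{i ≥ 1 : a_{-i} > i}` (a.s. finite
when `E[a₀] < ∞`, so the natural-number cardinality `Set.ncard` represents it a.s.). -/
noncomputable def popAtZero {Ω : Type*} (a : ℤ → Ω → ℕ) (ω : Ω) : ℕ :=
  1 + Set.ncard {i : ℕ | 1 ≤ i ∧ i < a (-(i : ℤ)) ω}

open Finset Topology

lemma lintegral_natCast_eq_tsum_measure_lt {Ω : Type*} [MeasurableSpace Ω] (μ : Measure Ω)
    {f : Ω → ℕ} (hf : Measurable f) :
    ∫⁻ ω, (f ω : ℝ≥0∞) ∂μ = ∑' i : ℕ, μ {ω | i < f ω} := by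
  have hset (i : ℕ) : MeasurableSet {ω | i < f ω} := hf .of_discrete
  have hcount (ω : Ω) : (f ω : ℝ≥0∞) = ∑' i : ℕ, {ω | i < f ω}.indicator 1 ω := by
    rw [tsum_eq_sum (s := range (f ω)) fun i hi => by simp_all]
    simp [Set.indicator_apply, filter_true_of_mem fun i hi => mem_range.1 hi]
  simp_rw [hcount]
  rw [lintegral_tsum fun i => (measurable_one.indicator (hset i)).aemeasurable]
  simp [lintegral_indicator (hset _)]

lemma ENNReal.prod_one_add_le_ofReal_exp_tsum {ι : Type*} (s : Finset ι) {x : ι → ℝ≥0∞}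
    (hx : ∑' i, x i ≠ ∞) :
    ∏ i ∈ s, (1 + x i) ≤ ENNReal.ofReal (Real.exp (∑' i, x i).toReal) := by
  have hfin := ENNReal.ne_top_of_tsum_ne_top hx
  calc ∏ i ∈ s, (1 + x i) = ENNReal.ofReal (∏ i ∈ s, (1 + (x i).toReal)) := by
        rw [ENNReal.ofReal_prod_of_nonneg fun i _ => by positivity]
        refine prod_congr rfl fun i _ => ?_
        rw [ENNReal.ofReal_add zero_le_one ENNReal.toReal_nonneg, ENNReal.ofReal_one,
          ENNReal.ofReal_toReal (hfin i)]
    _ ≤ ENNReal.ofReal (Real.exp (∑ i ∈ s, (x i).toReal)) :=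
        ENNReal.ofReal_le_ofReal (Real.prod_one_add_le_exp_sum s fun _ => ENNReal.toReal_nonneg)
    _ ≤ ENNReal.ofReal (Real.exp (∑' i, x i).toReal) := by
        refine ENNReal.ofReal_le_ofReal (Real.exp_le_exp.2 ?_)
        rw [← ENNReal.toReal_sum fun i _ => hfin i]
        exact ENNReal.toReal_mono hx (ENNReal.sum_le_tsum s)

lemma eventually_card_filter_Icc_eq_ncard {p : ℕ → Prop} [DecidablePred p]
    (hp : ∀ᶠ i in atTop, ¬ p i) :
    ∀ᶠ I in atTop, #{i ∈ Icc 1 I | p i} = {i | 1 ≤ i ∧ p i}.ncard := by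
  obtain ⟨n, hn⟩ := eventually_atTop.1 hp
  filter_upwards [eventually_ge_atTop n] with I hI
  rw [← Set.ncard_coe_finset]
  congr 1
  ext i
  simp only [coe_filter, mem_Icc, Set.mem_ofPred_eq]
  refine ⟨fun h => ⟨h.1.1, h.2⟩, fun h => ⟨⟨h.1, ?_⟩, h.2⟩⟩
  by_contra hiI
  exact hn i (by omega) h.2

section Independent

variable {Ω ι β : Type*} [MeasurableSpace Ω] [MeasurableSpace β] {μ : Measure Ω}

lemma lintegral_ite_const_one {q : Ω → Prop} [DecidablePred q] (hq : MeasurableSet {ω | q ω})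
    (c : ℝ≥0∞) : ∫⁻ ω, (if q ω then c else 1) ∂μ = c * μ {ω | q ω} + μ {ω | ¬ q ω} := by
  rw [← lintegral_add_compl _ hq, ← setLIntegral_const, ← setLIntegral_one]
  congr 1
  · exact setLIntegral_congr_fun hq fun ω hω => if_pos hω
  · exact setLIntegral_congr_fun hq.compl fun ω hω => if_neg hω

variable {X : ι → Ω → β} (p : ι → β → Prop) [∀ i, DecidablePred (p i)]

lemma measurable_card_filter (hXm : ∀ i, Measurable (X i)) (hp : ∀ i, MeasurableSet {b | p i b})
    (s : Finset ι) : Measurable fun ω => #{i ∈ s | p i (X i ω)} := by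
  simp only [card_filter]
  exact measurable_sum _ fun i _ => Measurable.ite (hXm i (hp i)) measurable_const measurable_const

lemma lintegral_pow_card_filter_of_iIndepFun (hXm : ∀ i, Measurable (X i))
    (hp : ∀ i, MeasurableSet {b | p i b}) (hX : iIndepFun X μ) (c : ℝ≥0∞) (s : Finset ι) :
    ∫⁻ ω, c ^ #{i ∈ s | p i (X i ω)} ∂μ
      = ∏ i ∈ s, (c * μ {ω | p i (X i ω)} + μ {ω | ¬ p i (X i ω)}) := by
  have hpow (ω : Ω) : c ^ #{i ∈ s | p i (X i ω)} = ∏ i ∈ s, if p i (X i ω) then c else 1 := by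
    simp [prod_ite]
  have hφ (i : ι) : Measurable fun b => if p i b then c else 1 :=
    measurable_const.ite (hp i) measurable_const
  simp_rw [hpow]
  rw [lintegral_prod_eq_prod_lintegral_of_indepFun s (fun i ω => if p i (X i ω) then c else 1)
    (hX.comp _ hφ) fun i => (hφ i).comp (hXm i)]
  exact prod_congr rfl fun i _ => lintegral_ite_const_one (hXm i (hp i)) c

end Independent

section Limits

variable {Ω : Type*} [MeasurableSpace Ω] {μ : Measure Ω}

lemma tendsto_lintegral_pow_of_eventually_eq [IsFiniteMeasure μ] (c : ℝ≥0∞) {X : ℕ → Ω → ℕ}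
    {Y : Ω → ℕ} (hXm : ∀ n, Measurable (X n)) (hmono : ∀ ω, Monotone fun n => X n ω)
    (hlim : ∀ᵐ ω ∂μ, ∀ᶠ n in atTop, X n ω = Y ω) :
    Tendsto (fun n => ∫⁻ ω, c ^ X n ω ∂μ) atTop (𝓝 (∫⁻ ω, c ^ Y ω ∂μ)) := by
  have hpow : ∀ᵐ ω ∂μ, Tendsto (fun n => c ^ X n ω) atTop (𝓝 (c ^ Y ω)) :=
    hlim.mono fun ω h => tendsto_const_nhds.congr' (h.mono fun n hn => congrArg (c ^ ·) hn.symm)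
  have hm (n : ℕ) : Measurable fun ω => c ^ X n ω := measurable_const.pow (hXm n)
  rcases le_total c 1 with hc | hc
  · exact tendsto_lintegral_of_dominated_convergence (fun _ => 1) hm
      (fun n => ae_of_all _ fun ω => pow_le_one₀ bot_le hc) (by simp) hpow
  · exact lintegral_tendsto_of_tendsto_of_monotone (fun n => (hm n).aemeasurable)
      (ae_of_all _ fun ω m n hmn => pow_le_pow_right₀ hc (hmono ω hmn)) hpow

lemma ae_eventually_le_of_identDistrib {X : ℕ → Ω → ℕ} {Y : Ω → ℕ}
    (hX : ∀ i, IdentDistrib (X i) Y μ μ) (hY : Measurable Y)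
    (hint : ∫⁻ ω, (Y ω : ℝ≥0∞) ∂μ ≠ ∞) :
    ∀ᵐ ω ∂μ, ∀ᶠ i in atTop, X i ω ≤ i := by
  have hsum : ∑' i, μ {ω | i < X i ω} ≠ ∞ := by
    have hmem (i : ℕ) : μ {ω | i < X i ω} = μ {ω | i < Y ω} :=
      (hX i).measure_mem_eq measurableSet_Ioi
    rwa [tsum_congr hmem, ← lintegral_natCast_eq_tsum_measure_lt μ hY]
  exact (ae_eventually_notMem hsum).mono fun ω h => h.mono fun i hi => not_lt.1 hi

end Limits

def popUpTo {Ω : Type*} (a : ℤ → Ω → ℕ) (I : ℕ) (ω : Ω) : ℕ :=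
  1 + #{i ∈ Icc 1 I | i < a (-((i : ℕ) : ℤ)) ω}

lemma popUpTo_mono {Ω : Type*} (a : ℤ → Ω → ℕ) (ω : Ω) : Monotone fun I => popUpTo a I ω :=
  fun _ _ hIJ =>
    Nat.add_le_add_left (card_le_card (filter_subset_filter _ (Icc_subset_Icc_right hIJ))) 1

section Population

variable {Ω : Type*} [MeasurableSpace Ω] {P : Measure Ω} {a : ℤ → Ω → ℕ}

lemma measurable_popUpTo (hmeas : ∀ n, Measurable (a n)) (I : ℕ) : Measurable (popUpTo a I) :=
  measurable_const.add <| measurable_card_filter (X := fun i : ℕ => a (-(i : ℤ)))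
    (fun i n => i < n) (fun _ => hmeas _) (fun _ => .of_discrete) _

lemma ae_eventually_popUpTo_eq_popAtZero (hmeas : ∀ n, Measurable (a n))
    (hident : ∀ n, IdentDistrib (a n) (a 0) P P) (hmean : ∫⁻ ω, (a 0 ω : ℝ≥0∞) ∂P ≠ ∞) :
    ∀ᵐ ω ∂P, ∀ᶠ I in atTop, popUpTo a I ω = popAtZero a ω := by
  filter_upwards [ae_eventually_le_of_identDistrib (fun i : ℕ => hident (-(i : ℤ))) (hmeas 0)
    hmean] with ω hω
  filter_upwards [eventually_card_filter_Icc_eq_ncard (hω.mono fun i hi => not_lt.2 hi)] with I hI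
  rw [popUpTo, popAtZero, hI]

lemma lintegral_pow_popUpTo (hmeas : ∀ n, Measurable (a n)) (hindep : iIndepFun a P)
    (hident : ∀ n, IdentDistrib (a n) (a 0) P P) (c : ℝ≥0∞) (I : ℕ) :
    ∫⁻ ω, c ^ popUpTo a I ω ∂P
      = c * ∏ i ∈ Icc 1 I, (c * P {ω | i < a 0 ω} + P {ω | a 0 ω ≤ i}) := by
  have hX : iIndepFun (fun i : ℕ => a (-(i : ℤ))) P :=
    hindep.precomp (neg_injective.comp Nat.cast_injective)
  simp_rw [popUpTo, pow_add, pow_one]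
  rw [lintegral_const_mul _ (measurable_const.pow (measurable_card_filter (fun i n => i < n)
      (fun _ => hmeas _) (fun _ => .of_discrete) _)),
    lintegral_pow_card_filter_of_iIndepFun (fun i n => i < n) (fun _ => hmeas _)
      (fun _ => .of_discrete) hX]
  refine congrArg (c * ·) (prod_congr rfl fun i _ => ?_)
  have hgt : P {ω | i < a (-(i : ℤ)) ω} = P {ω | i < a 0 ω} :=
    (hident _).measure_mem_eq (s := Set.Ioi i) .of_discrete
  have hle : P {ω | ¬ i < a (-(i : ℤ)) ω} = P {ω | a 0 ω ≤ i} := by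
    simp only [not_lt]
    exact (hident _).measure_mem_eq (s := Set.Iic i) .of_discrete
  rw [hgt, hle]

lemma lintegral_pow_popUpTo_le [IsProbabilityMeasure P] (hmeas : ∀ n, Measurable (a n))
    (hindep : iIndepFun a P) (hident : ∀ n, IdentDistrib (a n) (a 0) P P)
    (hmean : ∫⁻ ω, (a 0 ω : ℝ≥0∞) ∂P ≠ ∞) {c : ℝ≥0∞} (hc : c ≠ ∞) (I : ℕ) :
    ∫⁻ ω, c ^ popUpTo a I ω ∂P
      ≤ c * ENNReal.ofReal (Real.exp (c * ∫⁻ ω, (a 0 ω : ℝ≥0∞) ∂P).toReal) := by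
  have hsum : ∑' i : ℕ, c * P {ω | i < a 0 ω} = c * ∫⁻ ω, (a 0 ω : ℝ≥0∞) ∂P := by
    rw [ENNReal.tsum_mul_left, lintegral_natCast_eq_tsum_measure_lt P (hmeas 0)]
  rw [lintegral_pow_popUpTo hmeas hindep hident, ← hsum]
  refine mul_le_mul_right ((prod_le_prod' fun i _ => ?_).trans
    (ENNReal.prod_one_add_le_ofReal_exp_tsum _ (hsum ▸ ENNReal.mul_ne_top hc hmean))) c
  rw [add_comm 1]
  exact add_le_add le_rfl prob_le_one

end Population

theorem mgf_N_zero_formula_and_finite_general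
    {Ω : Type*} [MeasurableSpace Ω] (P : Measure Ω) [IsProbabilityMeasure P]
    (a : ℤ → Ω → ℕ) (hmeas : ∀ n, Measurable (a n))
    (hindep : iIndepFun a P)
    (hident : ∀ n, Measure.map (a n) P = Measure.map (a 0) P)
    (hmean : ∫⁻ ω, (a 0 ω : ℝ≥0∞) ∂P < ⊤) :
    ∀ t : ℝ,
      Tendsto
        (fun I : ℕ =>
          ENNReal.ofReal (Real.exp t) *
            ∏ i ∈ Finset.Icc 1 I,
              (ENNReal.ofReal (Real.exp t) * P {ω | i < a 0 ω} + P {ω | a 0 ω ≤ i}))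
        atTop
        (nhds (∫⁻ ω, ENNReal.ofReal (Real.exp (t * (popAtZero a ω : ℝ))) ∂P)) ∧
      ∫⁻ ω, ENNReal.ofReal (Real.exp (t * (popAtZero a ω : ℝ))) ∂P < ⊤ := by
  intro t
  set c := ENNReal.ofReal (Real.exp t)
  have hid (n : ℤ) : IdentDistrib (a n) (a 0) P P :=
    ⟨(hmeas n).aemeasurable, (hmeas 0).aemeasurable, hident n⟩
  have hmgf (ω : Ω) : ENNReal.ofReal (Real.exp (t * popAtZero a ω)) = c ^ popAtZero a ω := by
    rw [mul_comm, Real.exp_nat_mul, ENNReal.ofReal_pow (Real.exp_nonneg t)]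
  have hlim := tendsto_lintegral_pow_of_eventually_eq c (measurable_popUpTo hmeas)
    (popUpTo_mono a) (ae_eventually_popUpTo_eq_popAtZero hmeas hid hmean.ne)
  simp_rw [hmgf, ← lintegral_pow_popUpTo hmeas hindep hid]
  refine ⟨hlim, (le_of_tendsto' hlim
    (lintegral_pow_popUpTo_le hmeas hindep hid hmean.ne ENNReal.ofReal_ne_top)).trans_lt
    (ENNReal.mul_lt_top ENNReal.ofReal_lt_top ENNReal.ofReal_lt_top)⟩

/-- For every `t ∈ ℝ`, the moment generating function of `N₀` satisfies
`E[e^{t N₀}] = e^t ∏_{i=1}^∞ (e^t ℙ[a₀ > i] + ℙ[a₀ ≤ i])` (the infinite product being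
the limit of partial products), and moreover `E[e^{t N₀}] < ∞` for all `t ∈ ℝ`, so `N₀`
is light-tailed regardless of the distribution of `a₀`. -/
theorem mgf_N_zero_formula_and_finite
    {Ω : Type*} [MeasurableSpace Ω] (P : Measure Ω) [IsProbabilityMeasure P]
    (a : ℤ → Ω → ℕ) (hmeas : ∀ n, Measurable (a n)) (hpos : ∀ n ω, 1 ≤ a n ω)
    (hindep : iIndepFun a P)
    (hident : ∀ n, Measure.map (a n) P = Measure.map (a 0) P)
    (hmean : ∫⁻ ω, (a 0 ω : ℝ≥0∞) ∂P < ⊤) :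
    ∀ t : ℝ,
      Tendsto
        (fun I : ℕ =>
          ENNReal.ofReal (Real.exp t) *
            ∏ i ∈ Finset.Icc 1 I,
              (ENNReal.ofReal (Real.exp t) * P {ω | i < a 0 ω} + P {ω | a 0 ω ≤ i}))
        atTop
        (nhds (∫⁻ ω, ENNReal.ofReal (Real.exp (t * (popAtZero a ω : ℝ))) ∂P)) ∧
      ∫⁻ ω, ENNReal.ofReal (Real.exp (t * (popAtZero a ω : ℝ))) ∂P < ⊤ :=
  mgf_N_zero_formula_and_finite_general P a hmeas hindep hident hmean
end

section
/- Suppose a_0 is geometric on {1,2,…} with parameter s ∈ (0,1), i.e., ℙ[a_0 = k] = s(1−s)^{k−1} for k ≥ 1, and set r = 1−s. Let G(z) = E[z^{N_0}] for z ∈ [0,1] be the probability generating function of N_0. Then G(z) = z · ∏_{i=1}^∞ ( z r^i + 1 − r^i ), and G satisfies the functional equation G(z) = z · G(r z + s) for all z ∈ [0,1]. -/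
open MeasureTheory ProbabilityTheory Filter Topology Finset
open scoped ENNReal

/-!
Only the times `-i` with `a_{-i} > i` contribute to `N₀`, and these events are independent with
probabilities `rⁱ`. Counting only `i ≤ I` therefore gives the pgf `z ∏_{i=1}^I (z rⁱ + 1 - rⁱ)`,
and since `∑ rⁱ < ∞` Borel–Cantelli makes the truncation eventually exact, so dominated
convergence passes to the limit. The functional equation is the identity
`z rⁱ⁺¹ + 1 - rⁱ⁺¹ = (rz + s) rⁱ + 1 - rⁱ`, which shifts the partial products by one factor.
-/

section Probability

variable {Ω : Type*} [MeasurableSpace Ω] {P : Measure Ω}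

lemma measure_lt_of_geometric {X : Ω → ℕ} (hX : Measurable X) {s : ℝ} (hs : 0 < s)
    (hs1 : s < 1)
    (hgeom : ∀ k : ℕ, 1 ≤ k → P {ω | X ω = k} = ENNReal.ofReal (s * (1 - s) ^ (k - 1)))
    (i : ℕ) : P {ω | i < X ω} = ENNReal.ofReal ((1 - s) ^ i) := by
  have hr0 : 0 ≤ 1 - s := by linarith
  have hunion : {ω | i < X ω} = ⋃ k : ℕ, {ω | X ω = i + 1 + k} := by
    ext ω
    simp only [Set.mem_ofPred_eq, Set.mem_iUnion]
    exact ⟨fun h => ⟨X ω - i - 1, by omega⟩, fun ⟨k, hk⟩ => by omega⟩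
  have hdisj : Pairwise (Function.onFun Disjoint fun k : ℕ => {ω | X ω = i + 1 + k}) :=
    fun k l hkl => Set.disjoint_left.2 fun ω h1 h2 => hkl (by simp_all)
  have hsum : HasSum (fun k : ℕ => s * (1 - s) ^ (i + k)) ((1 - s) ^ i) := by
    have h := (hasSum_geometric_of_lt_one hr0 (by linarith)).mul_left (s * (1 - s) ^ i)
    rw [sub_sub_cancel, mul_right_comm, mul_inv_cancel₀ hs.ne', one_mul] at h
    simpa only [pow_add, mul_assoc] using h
  calc P {ω | i < X ω}
      = ∑' k : ℕ, P {ω | X ω = i + 1 + k} := by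
        rw [hunion, measure_iUnion hdisj fun k => hX (measurableSet_singleton _)]
    _ = ∑' k : ℕ, ENNReal.ofReal (s * (1 - s) ^ (i + k)) :=
        tsum_congr fun k => by rw [hgeom _ (by omega), show i + 1 + k - 1 = i + k by omega]
    _ = ENNReal.ofReal ((1 - s) ^ i) := by
        rw [← ENNReal.ofReal_tsum_of_nonneg (fun k => mul_nonneg hs.le (pow_nonneg hr0 _))
          hsum.summable, hsum.tsum_eq]

lemma integral_ite_const_one [IsProbabilityMeasure P] {p : Ω → Prop} [DecidablePred p]
    (hp : MeasurableSet {ω | p ω}) (z : ℝ) :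
    ∫ ω, (if p ω then z else 1) ∂P = z * P.real {ω | p ω} + 1 - P.real {ω | p ω} := by
  change ∫ ω, Set.piecewise {ω | p ω} (fun _ => z) (fun _ => 1) ω ∂P = _
  rw [integral_piecewise hp integrableOn_const integrableOn_const, setIntegral_const,
    setIntegral_const, probReal_compl_eq_one_sub hp, smul_eq_mul, smul_eq_mul]
  ring

lemma ProbabilityTheory.iIndepFun.integral_finset_prod_comp {ι 𝓧 : Type*} [MeasurableSpace 𝓧]
    {X : ι → Ω → 𝓧} (hX : iIndepFun X P) (hXm : ∀ i, Measurable (X i)) {f : ι → 𝓧 → ℝ}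
    (hf : ∀ i, Measurable (f i)) (s : Finset ι) :
    ∫ ω, ∏ i ∈ s, f i (X i ω) ∂P = ∏ i ∈ s, ∫ ω, f i (X i ω) ∂P := by
  have := (hX.precomp Subtype.val_injective).integral_fun_prod_comp (f := fun i : s => f i)
    (fun i => (hXm i).aemeasurable) (fun i => (hf i).aestronglyMeasurable)
  rw [← prod_coe_sort s, ← this]
  exact integral_congr_ae (ae_of_all _ fun ω => (prod_coe_sort s _).symm)

lemma ae_finite_setOf_lt_of_tail_le {X : ℕ → Ω → ℕ} {r : ℝ} (hr0 : 0 ≤ r) (hr1 : r < 1)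
    (htail : ∀ i, P {ω | i < X i ω} ≤ ENNReal.ofReal (r ^ i)) :
    ∀ᵐ ω ∂P, {i | i < X i ω}.Finite := by
  refine ae_finite_setOfPred_mem (ne_top_of_le_ne_top ?_ (ENNReal.tsum_le_tsum htail))
  rw [← ENNReal.ofReal_tsum_of_nonneg (fun i => pow_nonneg hr0 i)
    (summable_geometric_of_lt_one hr0 hr1)]
  exact ENNReal.ofReal_ne_top

end Probability

section PartialPopulation

variable {Ω : Type*}

noncomputable def partialPop (a : ℤ → Ω → ℕ) (I : ℕ) (ω : Ω) : ℕ :=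
  1 + #((Icc 1 I).filter fun i : ℕ => i < a (-(i : ℤ)) ω)

lemma pow_partialPop (a : ℤ → Ω → ℕ) (I : ℕ) (ω : Ω) (z : ℝ) :
    z ^ partialPop a I ω = z * ∏ i ∈ Icc 1 I, (if i < a (-(i : ℤ)) ω then z else 1) := by
  rw [partialPop, pow_add, pow_one, prod_ite, prod_const, prod_const, one_pow, mul_one]

lemma eventually_partialPop_eq (a : ℤ → Ω → ℕ) {ω : Ω}
    (hω : {i : ℕ | i < a (-(i : ℤ)) ω}.Finite) :
    ∀ᶠ I in atTop, partialPop a I ω = popAtZero a ω := by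
  obtain ⟨I₀, hI₀⟩ := hω.bddAbove
  filter_upwards [eventually_ge_atTop I₀] with I hI
  rw [partialPop, popAtZero, ← Set.ncard_coe_finset]
  congr 2
  ext i
  simp only [coe_filter, mem_Icc, Set.mem_ofPred_eq]
  exact ⟨fun ⟨⟨h1, _⟩, h⟩ => ⟨h1, h⟩, fun ⟨h1, h⟩ => ⟨⟨h1, (hI₀ h).trans hI⟩, h⟩⟩

variable [MeasurableSpace Ω] {P : Measure Ω} {a : ℤ → Ω → ℕ}

lemma integral_pow_partialPop [IsProbabilityMeasure P] (hmeas : ∀ n, Measurable (a n))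
    (hindep : iIndepFun a P) {r : ℝ} (hr0 : 0 ≤ r)
    (htail : ∀ i : ℕ, P {ω | i < a (-(i : ℤ)) ω} = ENNReal.ofReal (r ^ i)) (z : ℝ) (I : ℕ) :
    ∫ ω, z ^ partialPop a I ω ∂P = z * ∏ i ∈ Icc 1 I, (z * r ^ i + 1 - r ^ i) := by
  have hindep' : iIndepFun (fun i : ℕ => a (-(i : ℤ))) P :=
    hindep.precomp fun i j h => by simpa using h
  simp_rw [pow_partialPop]
  rw [integral_const_mul, hindep'.integral_finset_prod_comp (fun i => hmeas _)
    (f := fun i m => if i < m then z else 1) (fun i => measurable_from_nat)]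
  refine congrArg (z * ·) (prod_congr rfl fun i _ => ?_)
  rw [integral_ite_const_one (measurableSet_lt measurable_const (hmeas _)), measureReal_def,
    htail, ENNReal.toReal_ofReal (pow_nonneg hr0 i)]

lemma tendsto_integral_pow_partialPop [IsProbabilityMeasure P] (hmeas : ∀ n, Measurable (a n))
    (hfin : ∀ᵐ ω ∂P, {i : ℕ | i < a (-(i : ℤ)) ω}.Finite) {z : ℝ} (hz : z ∈ Set.Icc 0 1) :
    Tendsto (fun I => ∫ ω, z ^ partialPop a I ω ∂P) atTop
      (𝓝 (∫ ω, z ^ popAtZero a ω ∂P)) := by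
  have hm : ∀ I, Measurable fun ω => z ^ partialPop a I ω := fun I => by
    simp_rw [pow_partialPop]
    exact measurable_const.mul (Finset.measurable_prod _ fun i _ =>
      Measurable.ite (measurableSet_lt measurable_const (hmeas _)) measurable_const
        measurable_const)
  refine tendsto_integral_of_dominated_convergence (fun _ => 1)
    (fun I => (hm I).aestronglyMeasurable) (integrable_const 1)
    (fun I => ae_of_all _ fun ω => ?_) ?_
  · rw [Real.norm_eq_abs, abs_of_nonneg (pow_nonneg hz.1 _)]
    exact pow_le_one₀ hz.1 hz.2
  · filter_upwards [hfin] with ω hω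
    exact tendsto_const_nhds.congr'
      ((eventually_partialPop_eq a hω).mono fun I h => congrArg (z ^ ·) h.symm)

end PartialPopulation

lemma prod_Icc_one_succ_eq_mul_prod (r z : ℝ) (I : ℕ) :
    ∏ i ∈ Icc 1 (I + 1), (z * r ^ i + 1 - r ^ i)
      = (r * z + 1 - r) * ∏ i ∈ Icc 1 I, ((r * z + 1 - r) * r ^ i + 1 - r ^ i) := by
  induction I with
  | zero => simp; ring
  | succ I ih =>
    rw [prod_Icc_succ_top (by omega), ih, prod_Icc_succ_top (by omega)]
    ring

theorem pgf_N_zero_geometric_general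
    {Ω : Type*} [MeasurableSpace Ω] (P : Measure Ω) [IsProbabilityMeasure P]
    (a : ℤ → Ω → ℕ) (hmeas : ∀ n, Measurable (a n))
    (hindep : iIndepFun a P)
    (hident : ∀ n, Measure.map (a n) P = Measure.map (a 0) P)
    (s r : ℝ) (hs : 0 < s) (hs1 : s < 1) (hr : r = 1 - s)
    (hgeom : ∀ k : ℕ, 1 ≤ k →
      P {ω | a 0 ω = k} = ENNReal.ofReal (s * (1 - s) ^ (k - 1)))
    (G : ℝ → ℝ) (hG : ∀ z : ℝ, G z = ∫ ω, z ^ popAtZero a ω ∂P) :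
    (∀ z ∈ Set.Icc (0 : ℝ) 1,
      Tendsto (fun I : ℕ => z * ∏ i ∈ Finset.Icc 1 I, (z * r ^ i + 1 - r ^ i))
        atTop (nhds (G z))) ∧
    (∀ z ∈ Set.Icc (0 : ℝ) 1, G z = z * G (r * z + s)) := by
  have hr0 : 0 ≤ r := by linarith
  have hr1 : r < 1 := by linarith
  have htail : ∀ n (i : ℕ), P {ω | i < a n ω} = ENNReal.ofReal (r ^ i) := fun n i =>
    (IdentDistrib.measure_mem_eq ⟨(hmeas n).aemeasurable, (hmeas 0).aemeasurable, hident n⟩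
      measurableSet_Ioi).trans (hr ▸ measure_lt_of_geometric (hmeas 0) hs hs1 hgeom i)
  have hfin : ∀ᵐ ω ∂P, {i : ℕ | i < a (-(i : ℤ)) ω}.Finite :=
    ae_finite_setOf_lt_of_tail_le hr0 hr1 fun i => (htail _ i).le
  have hlim : ∀ z ∈ Set.Icc (0 : ℝ) 1,
      Tendsto (fun I : ℕ => z * ∏ i ∈ Icc 1 I, (z * r ^ i + 1 - r ^ i)) atTop (𝓝 (G z)) :=
    fun z hz => by
      simpa only [integral_pow_partialPop hmeas hindep hr0 fun i => htail _ i, ← hG]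
        using tendsto_integral_pow_partialPop hmeas hfin hz
  refine ⟨hlim, fun z hz => tendsto_nhds_unique ((hlim z hz).comp (tendsto_add_atTop_nat 1)) ?_⟩
  have hw : r * z + s ∈ Set.Icc (0 : ℝ) 1 :=
    ⟨by nlinarith [hz.1], by nlinarith [hz.2]⟩
  have hshift : r * z + 1 - r = r * z + s := by rw [hr]; ring
  convert (hlim _ hw).const_mul z using 2 with I
  rw [Function.comp_apply, prod_Icc_one_succ_eq_mul_prod, hshift]

/-- Suppose `a₀` is geometric on `{1,2,…}` with parameter `s ∈ (0,1)`,
i.e. `ℙ[a₀ = k] = s (1-s)^{k-1}` for `k ≥ 1`, and set `r = 1 - s`. Let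
`G(z) = E[z^{N₀}]`, `z ∈ [0,1]`, be the probability generating function of `N₀`. Then
`G(z) = z ∏_{i=1}^∞ (z rⁱ + 1 − rⁱ)` (the infinite product being the limit of the
partial products), and `G` satisfies the functional equation `G(z) = z G(rz + s)` for
all `z ∈ [0,1]`. -/
theorem pgf_N_zero_geometric
    {Ω : Type*} [MeasurableSpace Ω] (P : Measure Ω) [IsProbabilityMeasure P]
    (a : ℤ → Ω → ℕ) (hmeas : ∀ n, Measurable (a n)) (hpos : ∀ n ω, 1 ≤ a n ω)
    (hindep : iIndepFun a P)
    (hident : ∀ n, Measure.map (a n) P = Measure.map (a 0) P)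
    (s r : ℝ) (hs : 0 < s) (hs1 : s < 1) (hr : r = 1 - s)
    (hgeom : ∀ k : ℕ, 1 ≤ k →
      P {ω | a 0 ω = k} = ENNReal.ofReal (s * (1 - s) ^ (k - 1)))
    (G : ℝ → ℝ) (hG : ∀ z : ℝ, G z = ∫ ω, z ^ popAtZero a ω ∂P) :
    (∀ z ∈ Set.Icc (0 : ℝ) 1,
      Tendsto (fun I : ℕ => z * ∏ i ∈ Finset.Icc 1 I, (z * r ^ i + 1 - r ^ i))
        atTop (nhds (G z))) ∧
    (∀ z ∈ Set.Icc (0 : ℝ) 1, G z = z * G (r * z + s)) :=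
  pgf_N_zero_geometric_general P a hmeas hindep hident s r hs hs1 hr hgeom G hG
end

section
/- The directed graph T^f generated by f has a single connected component: almost surely, for every pair of integers n, m there exist i, j ≥ 0 such that f^i(n) = f^j(m). -/
open MeasureTheory ProbabilityTheory Filter
open scoped ENNReal

/-!
Call `k` a cut point above `N` if no arrow of `T^f` starting in `[N, k)` jumps over `k`; since
`f` moves strictly to the right, every orbit entering `[N, k]` then hits `k`, so if cut points
above some `N` are unbounded any two orbits meet. By independence the probability that `k` is a
cut point above `N` is `∏_{t=1}^{k-N} ℙ[a_0 ≤ t]`, which is bounded below uniformly by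
`∏_{t≥1} ℙ[a_0 ≤ t] > 0` because `∑ ℙ[a_0 > t] = E[a_0] < ∞` and `ℙ[a_0 ≤ 1] > 0`. Hence the
event that cut points above `N` are unbounded has probability bounded below, and the union of
these events over `N` is a tail event, so it has probability one by Kolmogorov's 0-1 law.
-/

/-- The random map `f(n) = n + a_n` generating the family tree `T^f`. -/
def genMap {Ω : Type*} (a : ℤ → Ω → ℕ) (ω : Ω) : ℤ → ℤ :=
  fun n => n + (a n ω : ℤ)

section Coalescence

variable {f : ℤ → ℤ}

def IsCutAbove (f : ℤ → ℤ) (N k : ℤ) : Prop := ∀ j, N ≤ j → j < k → f j ≤ k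

lemma add_le_iterate_of_lt_self (hf : ∀ n, n < f n) (i : ℕ) (n : ℤ) : n + i ≤ f^[i] n := by
  induction i with
  | zero => simp
  | succ i ih =>
    rw [Function.iterate_succ_apply']
    have := hf (f^[i] n)
    push_cast
    omega

lemma IsCutAbove.exists_iterate_eq (hf : ∀ n, n < f n) {N k : ℤ} (hk : IsCutAbove f N k)
    {n : ℤ} (hNn : N ≤ n) (hnk : n ≤ k) : ∃ i, f^[i] n = k := by
  induction hd : (k - n).toNat using Nat.strong_induction_on generalizing n with
  | _ d ih =>
    rcases hnk.eq_or_lt with rfl | hlt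
    · exact ⟨0, rfl⟩
    · have hstep := hf n
      have hjump := hk n hNn hlt
      obtain ⟨i, hi⟩ := ih _ (by omega) (n := f n) (by omega) hjump rfl
      exact ⟨i + 1, hi⟩

lemma exists_iterate_eq_iterate_of_frequently_isCutAbove (hf : ∀ n, n < f n) {N : ℤ}
    (hcut : ∃ᶠ k in atTop, IsCutAbove f N k) (n m : ℤ) :
    ∃ i j : ℕ, f^[i] n = f^[j] m := by
  set n' := f^[(N - n).toNat] n
  set m' := f^[(N - m).toNat] m
  have hn' : N ≤ n' := by have := add_le_iterate_of_lt_self hf (N - n).toNat n; omega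
  have hm' : N ≤ m' := by have := add_le_iterate_of_lt_self hf (N - m).toNat m; omega
  obtain ⟨k, hk, hcutk⟩ := frequently_atTop.1 hcut (max n' m')
  obtain ⟨i, hi⟩ := hcutk.exists_iterate_eq hf hn' (le_of_max_le_left hk)
  obtain ⟨j, hj⟩ := hcutk.exists_iterate_eq hf hm' (le_of_max_le_right hk)
  exact ⟨i + (N - n).toNat, j + (N - m).toNat, by
    rw [Function.iterate_add_apply, Function.iterate_add_apply, hi, hj]⟩

end Coalescence

section ProductLowerBound

open Finset

lemma ENNReal.one_sub_sum_le_prod_one_sub {ι : Type*} (s : Finset ι) (q : ι → ℝ≥0∞) :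
    1 - ∑ i ∈ s, q i ≤ ∏ i ∈ s, (1 - q i) := by
  classical
  induction s using Finset.induction with
  | empty => simp
  | insert x s hx ih =>
    rw [sum_insert hx, prod_insert hx, tsub_add_eq_tsub_tsub]
    set c := 1 - q x
    have hc : c ≤ 1 := tsub_le_self
    calc c - ∑ i ∈ s, q i ≤ c * (1 - ∑ i ∈ s, q i) := by
          rw [tsub_le_iff_right]
          calc c ≤ c * (1 - ∑ i ∈ s, q i + ∑ i ∈ s, q i) := le_mul_of_one_le_right' le_tsub_add
            _ ≤ c * (1 - ∑ i ∈ s, q i) + ∑ i ∈ s, q i := by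
                  rw [mul_add]; gcongr; exact mul_le_of_le_one_left' hc
      _ ≤ c * ∏ i ∈ s, (1 - q i) := by gcongr

lemma ENNReal.exists_pos_forall_le_prod_one_sub {ι : Type*} {q : ι → ℝ≥0∞}
    (hq : ∑' i, q i ≠ ∞) (hq1 : ∀ i, q i < 1) :
    ∃ p, 0 < p ∧ ∀ s : Finset ι, p ≤ ∏ i ∈ s, (1 - q i) := by
  classical
  obtain ⟨u, hu⟩ : ∃ u : Finset ι, ∑' i : {i // i ∉ u}, q i < 2⁻¹ :=
    ((tendsto_order.1 (ENNReal.tendsto_tsum_compl_atTop_zero hq)).2 _ (by norm_num)).exists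
  refine ⟨(∏ i ∈ u, (1 - q i)) * 2⁻¹,
    ENNReal.mul_pos (prod_ne_zero_iff.2 fun i _ => (tsub_pos_of_lt (hq1 i)).ne') (by simp),
    fun s => ?_⟩
  have htail : ∑ i ∈ s \ u, q i ≤ 2⁻¹ := by
    calc ∑ i ∈ s \ u, q i = ∑ i ∈ (s \ u).subtype (· ∉ u), q i := by
          rw [sum_subtype_eq_sum_filter, filter_true_of_mem fun i hi => (mem_sdiff.1 hi).2]
      _ ≤ ∑' i : {i // i ∉ u}, q i := ENNReal.sum_le_tsum _
      _ ≤ 2⁻¹ := hu.le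
  rw [← prod_inter_mul_prod_sdiff s u]
  refine mul_le_mul' (prod_le_prod_of_subset_of_le_one' inter_subset_right
    fun i _ _ => tsub_le_self) ?_
  calc (2⁻¹ : ℝ≥0∞) = 1 - 2⁻¹ := by norm_num
    _ ≤ 1 - ∑ i ∈ s \ u, q i := by gcongr
    _ ≤ _ := ENNReal.one_sub_sum_le_prod_one_sub _ _

end ProductLowerBound

open Set in
lemma tsum_measure_Ioi_eq_lintegral (ν : Measure ℕ) :
    ∑' t, ν (Ioi t) = ∫⁻ n, (n : ℝ≥0∞) ∂ν := by
  have hcount : ∀ n : ℕ, ∑' t, (Ioi t).indicator (1 : ℕ → ℝ≥0∞) n = n := by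
    intro n
    rw [tsum_eq_sum (s := Finset.range n) fun t ht => by simpa [Finset.mem_range] using ht]
    simp [indicator_apply, ← Finset.mem_range]
  simp_rw [← lintegral_indicator_one measurableSet_Ioi, ← hcount]
  exact (lintegral_tsum fun t => (measurable_of_countable _).aemeasurable).symm

open Set in
lemma exists_pos_forall_le_prod_measure_Iic (ν : Measure ℕ) [IsProbabilityMeasure ν]
    (hmean : ∫⁻ n, (n : ℝ≥0∞) ∂ν < ∞) (h1 : 0 < ν (Iic 1)) :
    ∃ p, 0 < p ∧ ∀ s : Finset ℕ, p ≤ ∏ t ∈ s, ν (Iic (t + 1)) := by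
  have hsum : ∑' t, ν (Ioi (t + 1)) ≠ ∞ := by
    refine ne_top_of_le_ne_top ?_ (ENNReal.tsum_le_tsum fun t => measure_mono
      (Ioi_subset_Ioi t.le_succ))
    rw [tsum_measure_Ioi_eq_lintegral]
    exact hmean.ne
  have hlt : ∀ t, ν (Ioi (t + 1)) < 1 := by
    intro t
    rw [← compl_Iic, prob_compl_eq_one_sub measurableSet_Iic]
    exact ENNReal.sub_lt_self ENNReal.one_ne_top one_ne_zero
      (h1.trans_le (measure_mono (Iic_subset_Iic.2 (by omega)))).ne'
  obtain ⟨p, hp, hprod⟩ := ENNReal.exists_pos_forall_le_prod_one_sub hsum hlt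
  refine ⟨p, hp, fun s => (hprod s).trans_eq (Finset.prod_congr rfl fun t _ => ?_)⟩
  rw [← prob_compl_eq_one_sub measurableSet_Ioi, compl_Ioi]

lemma setOf_frequently_atTop_eq {α ι : Type*} [Preorder ι] [IsDirectedOrder ι] [Nonempty ι]
    (s : ι → Set α) : {x | ∃ᶠ i in atTop, x ∈ s i} = ⋂ i, ⋃ j ≥ i, s j := by
  ext x
  simp [frequently_atTop]

lemma MeasurableSet.setOf_frequently_atTop {α ι : Type*} {m : MeasurableSpace α} [Preorder ι]
    [IsDirectedOrder ι] [Nonempty ι] [Countable ι] {s : ι → Set α}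
    (hs : ∀ i, MeasurableSet[m] (s i)) : MeasurableSet[m] {x | ∃ᶠ i in atTop, x ∈ s i} := by
  rw [setOf_frequently_atTop_eq]
  exact .iInter fun i => .biUnion (Set.to_countable _) fun j _ => hs j

lemma le_measure_setOf_frequently {α ι : Type*} [MeasurableSpace α] {μ : Measure α}
    [IsFiniteMeasure μ] [Preorder ι] [IsDirectedOrder ι] [Nonempty ι] [Countable ι]
    {s : ι → Set α} (hs : ∀ i, MeasurableSet (s i)) {p : ℝ≥0∞} (hp : ∀ i, p ≤ μ (s i)) :
    p ≤ μ {x | ∃ᶠ i in atTop, x ∈ s i} := by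
  rw [setOf_frequently_atTop_eq, Antitone.measure_iInter]
  · exact le_iInf fun i => (hp i).trans (measure_mono (Set.subset_biUnion_of_mem le_rfl))
  · exact fun i j hij => Set.biUnion_subset_biUnion_left fun k hk => hij.trans hk
  · exact fun i => (MeasurableSet.biUnion (Set.to_countable _) fun j _ => hs j).nullMeasurableSet
  · exact ⟨Classical.arbitrary ι, measure_ne_top μ _⟩

section CutEvents

variable {Ω : Type*} (a : ℤ → Ω → ℕ)

def cutEvent (N k : ℤ) : Set Ω := {ω | IsCutAbove (genMap a ω) N k}

-- The bound `k - j` is written as `(k - j - 1).toNat + 1` to match the factors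
-- `ν (Iic (t + 1))` of `exists_pos_forall_le_prod_measure_Iic`.
lemma cutEvent_eq_biInter (N k : ℤ) :
    cutEvent a N k = ⋂ j ∈ Finset.Ico N k, a j ⁻¹' Set.Iic ((k - j - 1).toNat + 1) := by
  ext ω
  simp only [cutEvent, IsCutAbove, genMap, Set.mem_ofPred_eq, Set.mem_iInter, Finset.mem_Ico,
    Set.mem_preimage, Set.mem_Iic]
  refine forall_congr' fun j => ⟨fun h hj => ?_, fun h hNj hjk => ?_⟩
  · have := h hj.1 hj.2
    omega
  · have := h ⟨hNj, hjk⟩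
    omega

lemma measurableSet_cutEvent {m : MeasurableSpace Ω} {N : ℤ}
    (hm : ∀ j, N ≤ j → Measurable[m] (a j)) (k : ℤ) : MeasurableSet[m] (cutEvent a N k) := by
  rw [cutEvent_eq_biInter]
  exact Finset.measurableSet_biInter _ fun j hj => hm j (Finset.mem_Ico.1 hj).1 measurableSet_Iic

lemma measure_cutEvent {_ : MeasurableSpace Ω} {P : Measure Ω} {ν : Measure ℕ}
    (hmeas : ∀ n, Measurable (a n)) (hindep : iIndepFun a P) (hident : ∀ n, P.map (a n) = ν)
    (N k : ℤ) : P (cutEvent a N k) = ∏ j ∈ Finset.Ico N k, ν (Set.Iic ((k - j - 1).toNat + 1)) := by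
  rw [cutEvent_eq_biInter, hindep.meas_biInter fun j _ => ⟨_, measurableSet_Iic, rfl⟩]
  refine Finset.prod_congr rfl fun j _ => ?_
  rw [← hident j, Measure.map_apply (hmeas j) measurableSet_Iic]

lemma exists_pos_forall_le_measure_cutEvent {_ : MeasurableSpace Ω} {P : Measure Ω}
    {ν : Measure ℕ} [IsProbabilityMeasure ν]
    (hmeas : ∀ n, Measurable (a n)) (hindep : iIndepFun a P) (hident : ∀ n, P.map (a n) = ν)
    (hmean : ∫⁻ n, (n : ℝ≥0∞) ∂ν < ∞) (h1 : 0 < ν (Set.Iic 1)) :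
    ∃ p, 0 < p ∧ ∀ N k, p ≤ P (cutEvent a N k) := by
  obtain ⟨p, hp, hprod⟩ := exists_pos_forall_le_prod_measure_Iic ν hmean h1
  refine ⟨p, hp, fun N k => ?_⟩
  have hinj : Set.InjOn (fun j => (k - j - 1).toNat) (Finset.Ico N k) := by
    intro i hi j hj hij
    simp only [Finset.coe_Ico, Set.mem_Ico] at hi hj hij
    omega
  rw [measure_cutEvent a hmeas hindep hident,
    ← Finset.prod_image (f := fun t => ν (Set.Iic (t + 1))) hinj]
  exact hprod _

def frequentCutEvent (N : ℤ) : Set Ω := {ω | ∃ᶠ k in atTop, ω ∈ cutEvent a N k}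

lemma frequentCutEvent_mono : Monotone (frequentCutEvent a) :=
  fun _ _ hNM _ hω => hω.mono fun _ hk j hMj hjk => hk j (hNM.trans hMj) hjk

lemma measurableSet_frequentCutEvent {m : MeasurableSpace Ω} {N : ℤ}
    (hm : ∀ j, N ≤ j → Measurable[m] (a j)) : MeasurableSet[m] (frequentCutEvent a N) :=
  .setOf_frequently_atTop (measurableSet_cutEvent a hm)

lemma le_measure_frequentCutEvent {_ : MeasurableSpace Ω} {P : Measure Ω} [IsFiniteMeasure P]
    (hmeas : ∀ n, Measurable (a n)) {N : ℤ} {p : ℝ≥0∞} (hp : ∀ k, p ≤ P (cutEvent a N k)) :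
    p ≤ P (frequentCutEvent a N) :=
  le_measure_setOf_frequently (measurableSet_cutEvent a fun j _ => hmeas j) hp

lemma measurableSet_iUnion_frequentCutEvent_tail :
    MeasurableSet[limsup (fun n => (inferInstance : MeasurableSpace ℕ).comap (a n)) atTop]
      (⋃ N, frequentCutEvent a N) := by
  rw [atTop_basis.limsup_eq_iInf_iSup]
  simp only [MeasurableSpace.measurableSet_iInf]
  intro M _
  have hshift : ⋃ N, frequentCutEvent a N = ⋃ N, frequentCutEvent a (max N M) :=
    subset_antisymm (Set.iUnion_mono fun N => frequentCutEvent_mono a (le_max_left N M))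
      (Set.iUnion_subset fun N => Set.subset_iUnion _ _)
  rw [hshift]
  refine .iUnion fun N => measurableSet_frequentCutEvent a fun j hj => ?_
  exact Measurable.of_comap_le (le_iSup₂ (f := fun j (_ : j ∈ Set.Ici M) =>
    (inferInstance : MeasurableSpace ℕ).comap (a j)) j ((le_max_right N M).trans hj))

end CutEvents

lemma lt_genMap {Ω : Type*} {a : ℤ → Ω → ℕ} {ω : Ω} (hpos : ∀ n, 1 ≤ a n ω) (n : ℤ) :
    n < genMap a ω n := by
  have := hpos n
  simp only [genMap]
  omega

/-- The directed graph `T^f` generated by `f` has a single connected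
component: almost surely, for every pair of integers `n, m` there exist `i, j ≥ 0`
such that `f^i(n) = f^j(m)`. -/
theorem single_connected_component
    {Ω : Type*} [MeasurableSpace Ω] (P : Measure Ω) [IsProbabilityMeasure P]
    (a : ℤ → Ω → ℕ) (hmeas : ∀ n, Measurable (a n)) (hpos : ∀ n ω, 1 ≤ a n ω)
    (hindep : iIndepFun a P)
    (hident : ∀ n, Measure.map (a n) P = Measure.map (a 0) P)
    (hmean : ∫⁻ ω, (a 0 ω : ℝ≥0∞) ∂P < ⊤)
    (h1 : 0 < P {ω | a 0 ω = 1}) :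
    ∀ᵐ ω ∂P, ∀ n m : ℤ, ∃ i j : ℕ,
      (genMap a ω)^[i] n = (genMap a ω)^[j] m := by
  have : IsProbabilityMeasure (P.map (a 0)) :=
    Measure.isProbabilityMeasure_map (hmeas 0).aemeasurable
  obtain ⟨p, hp, hcut⟩ := exists_pos_forall_le_measure_cutEvent a hmeas hindep hident
    (by rwa [lintegral_map (measurable_of_countable _) (hmeas 0)])
    (by rw [Measure.map_apply (hmeas 0) measurableSet_Iic]
        exact h1.trans_le (measure_mono fun ω hω => by simp_all))
  set E := ⋃ N, frequentCutEvent a N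
  have hE : MeasurableSet E :=
    .iUnion fun N => measurableSet_frequentCutEvent a fun j _ => hmeas j
  have hE_pos : P E ≠ 0 := (hp.trans_le ((le_measure_frequentCutEvent a hmeas (hcut 0)).trans
    (measure_mono (Set.subset_iUnion (frequentCutEvent a) 0)))).ne'
  have hE_one : P E = 1 := (measure_zero_or_one_of_measurableSet_limsup_atTop
    (fun n => (hmeas n).comap_le) hindep.iIndep
    (measurableSet_iUnion_frequentCutEvent_tail a)).resolve_left hE_pos
  filter_upwards [(mem_ae_iff_prob_eq_one hE).2 hE_one] with ω hω
  obtain ⟨N, hN⟩ := Set.mem_iUnion.1 hω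
  exact exists_iterate_eq_iterate_of_frequently_isCutAbove (lt_genMap (hpos · ω)) hN
end

section
/- For every n ≥ 1, the expected number of descendants of degree n of the integer 0 equals one: E[ #{m ∈ ℤ : f^n(m) = 0} ] = 1. -/
/-!
Since `f^[n+1] m = f^[n] (m + a_m)`, the event `f^[n+1] m = z` splits over the value `j` of
`a_m` into `{a_m = j} ∩ {f^[n] (m + j) = z}`. The second event only involves the steps at
sites `≥ m + j > m` (as `a_m ≥ 1`), hence is independent of `a_m`. Summing over `m` and shifting
`m ↦ m - j`, the expected number of `z`-descendants of degree `n + 1` is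
`(∑ⱼ P(a_0 = j)) · E[d_n(z)] = E[d_n(z)]`, and `d_0(z) = 1`.
-/

open MeasureTheory ProbabilityTheory Filter
open scoped ENNReal

section StepsFrom

variable {Ω ι β : Type*} [Preorder ι] [MeasurableSpace β]

abbrev stepsFrom (a : ι → Ω → β) (k : ι) : MeasurableSpace Ω :=
  ⨆ i ∈ Set.Ici k, MeasurableSpace.comap (a i) ‹_›

variable (a : ι → Ω → β)

theorem stepsFrom_antitone : Antitone (stepsFrom a) :=
  fun _ _ hkl => biSup_mono fun _ hi => le_trans hkl hi

theorem measurableSet_stepsFrom_preimage (k : ι) {s : Set β} (hs : MeasurableSet s) :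
    MeasurableSet[stepsFrom a k] (a k ⁻¹' s) := by
  have hle : MeasurableSpace.comap (a k) ‹_› ≤ stepsFrom a k :=
    le_iSup₂ (f := fun i (_ : i ∈ Set.Ici k) => MeasurableSpace.comap (a i) ‹_›) k le_rfl
  exact hle _ ⟨s, hs, rfl⟩

theorem stepsFrom_le [mΩ : MeasurableSpace Ω] (hmeas : ∀ i, Measurable (a i)) (k : ι) :
    stepsFrom a k ≤ mΩ :=
  iSup₂_le fun i _ => (hmeas i).comap_le

theorem indep_comap_stepsFrom [MeasurableSpace Ω] {P : Measure Ω}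
    (hmeas : ∀ i, Measurable (a i)) (hindep : iIndepFun a P) {m k : ι} (hmk : m < k) :
    Indep (MeasurableSpace.comap (a m) ‹_›) (stepsFrom a k) P := by
  have hdisj : Disjoint ({m} : Set ι) (Set.Ici k) :=
    Set.disjoint_singleton_left.2 fun hkm => (lt_of_lt_of_le hmk hkm).false
  have := indep_iSup_of_disjoint (fun i => (hmeas i).comap_le)
    ((iIndepFun_iff_iIndep _ a P).1 hindep) hdisj
  rwa [iSup_singleton] at this

end StepsFrom

theorem tsum_measure_preimage_singleton_eq_one {Ω β : Type*} [MeasurableSpace Ω]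
    [MeasurableSpace β] [Countable β] [MeasurableSingletonClass β] {P : Measure Ω}
    [IsProbabilityMeasure P] {X : Ω → β} (hX : Measurable X) :
    ∑' b : β, P (X ⁻¹' {b}) = 1 := by
  rw [← (Equiv.Set.univ β).tsum_eq (fun b => P (X ⁻¹' {b})), ← measure_univ (μ := P),
    ← Set.preimage_univ (f := X)]
  exact tsum_measure_preimage_singleton Set.countable_univ
    fun b _ => hX (measurableSet_singleton b)

section GenMap

variable {Ω : Type*} (a : ℤ → Ω → ℕ)

theorem setOf_genMap_iterate_succ_eq (n : ℕ) (m z : ℤ) :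
    {ω | (genMap a ω)^[n + 1] m = z}
      = ⋃ j : ℕ, a m ⁻¹' {j} ∩ {ω | (genMap a ω)^[n] (m + j) = z} := by
  ext ω
  simp [Function.iterate_succ_apply, genMap]

theorem measurableSet_genMap_iterate_eq (n : ℕ) :
    ∀ k z : ℤ, MeasurableSet[stepsFrom a k] {ω | (genMap a ω)^[n] k = z} := by
  induction n with
  | zero => exact fun k z => MeasurableSet.const (k = z)
  | succ n ih =>
    intro k z
    rw [setOf_genMap_iterate_succ_eq]
    exact .iUnion fun j =>
      (measurableSet_stepsFrom_preimage a k (measurableSet_singleton j)).inter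
        (stepsFrom_antitone a (by omega : k ≤ k + j) _ (ih (k + j) z))

variable [MeasurableSpace Ω] {P : Measure Ω}

theorem measure_genMap_iterate_succ (hmeas : ∀ n, Measurable (a n))
    (hpos : ∀ n ω, 1 ≤ a n ω) (hindep : iIndepFun a P) (n : ℕ) (m z : ℤ) :
    P {ω | (genMap a ω)^[n + 1] m = z}
      = ∑' j : ℕ, P (a m ⁻¹' {j}) * P {ω | (genMap a ω)^[n] (m + j) = z} := by
  rw [setOf_genMap_iterate_succ_eq, measure_iUnion]
  · refine tsum_congr fun j => ?_
    rcases Nat.eq_zero_or_pos j with rfl | hj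
    · have hempty : a m ⁻¹' {0} = ∅ :=
        Set.eq_empty_of_forall_notMem fun ω (h : a m ω = 0) => by
          have := hpos m ω
          omega
      simp [hempty]
    · exact (Indep_iff _ _ P).1 (indep_comap_stepsFrom a hmeas hindep (by omega : m < m + j))
        _ _ ⟨{j}, measurableSet_singleton j, rfl⟩ (measurableSet_genMap_iterate_eq a n _ z)
  · exact (pairwise_disjoint_fiber (a m)).mono fun _ _ h =>
      h.mono Set.inter_subset_left Set.inter_subset_left
  · exact fun j => (hmeas m (measurableSet_singleton j)).inter
      (stepsFrom_le a hmeas _ _ (measurableSet_genMap_iterate_eq a n _ z))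

variable [IsProbabilityMeasure P]

theorem tsum_measure_genMap_iterate_succ (hmeas : ∀ n, Measurable (a n))
    (hpos : ∀ n ω, 1 ≤ a n ω) (hindep : iIndepFun a P)
    (hident : ∀ n, Measure.map (a n) P = Measure.map (a 0) P) (n : ℕ) (z : ℤ) :
    ∑' m : ℤ, P {ω | (genMap a ω)^[n + 1] m = z}
      = ∑' m : ℤ, P {ω | (genMap a ω)^[n] m = z} := by
  have hlaw : ∀ m j, P (a m ⁻¹' {j}) = P (a 0 ⁻¹' {j}) := fun m j => by
    rw [← Measure.map_apply (hmeas m) (measurableSet_singleton j), hident,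
      Measure.map_apply (hmeas 0) (measurableSet_singleton j)]
  set q : ℤ → ℝ≥0∞ := fun m => P {ω | (genMap a ω)^[n] m = z}
  calc ∑' m : ℤ, P {ω | (genMap a ω)^[n + 1] m = z}
      = ∑' (m : ℤ) (j : ℕ), P (a 0 ⁻¹' {j}) * q (m + j) := by
        simp_rw [measure_genMap_iterate_succ a hmeas hpos hindep, hlaw, q]
    _ = ∑' (j : ℕ) (m : ℤ), P (a 0 ⁻¹' {j}) * q (m + j) := ENNReal.tsum_comm
    _ = ∑' j : ℕ, P (a 0 ⁻¹' {j}) * ∑' m : ℤ, q m := by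
        refine tsum_congr fun j => ?_
        rw [ENNReal.tsum_mul_left]
        exact congrArg _ ((Equiv.addRight (j : ℤ)).tsum_eq q)
    _ = ∑' m : ℤ, q m := by
        rw [ENNReal.tsum_mul_right, tsum_measure_preimage_singleton_eq_one (hmeas 0), one_mul]

theorem tsum_measure_genMap_iterate_eq_one (hmeas : ∀ n, Measurable (a n))
    (hpos : ∀ n ω, 1 ≤ a n ω) (hindep : iIndepFun a P)
    (hident : ∀ n, Measure.map (a n) P = Measure.map (a 0) P) (n : ℕ) (z : ℤ) :
    ∑' m : ℤ, P {ω | (genMap a ω)^[n] m = z} = 1 := by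
  induction n with
  | zero =>
    rw [tsum_eq_single z fun m hm => by simp [hm]]
    simp
  | succ n ih => rw [tsum_measure_genMap_iterate_succ a hmeas hpos hindep hident, ih]

end GenMap

/-- For every `n ≥ 1`, the expected number of descendants of degree
`n` of the integer `0` equals one: `E[#{m ∈ ℤ : f^n(m) = 0}] = 1`. (The cardinality is
expressed as the `ℝ≥0∞`-valued sum of indicators.) -/
theorem expected_descendants_of_degree_n_eq_one
    {Ω : Type*} [MeasurableSpace Ω] (P : Measure Ω) [IsProbabilityMeasure P]
    (a : ℤ → Ω → ℕ) (hmeas : ∀ n, Measurable (a n)) (hpos : ∀ n ω, 1 ≤ a n ω)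
    (hindep : iIndepFun a P)
    (hident : ∀ n, Measure.map (a n) P = Measure.map (a 0) P) :
    ∀ n : ℕ, 1 ≤ n →
      ∫⁻ ω, (∑' m : ℤ, if (genMap a ω)^[n] m = 0 then (1 : ℝ≥0∞) else 0) ∂P = 1 := by
  intro n _
  have hE : ∀ m : ℤ, MeasurableSet {ω | (genMap a ω)^[n] m = 0} := fun m =>
    stepsFrom_le a hmeas m _ (measurableSet_genMap_iterate_eq a n m 0)
  rw [lintegral_tsum fun m =>
    (Measurable.ite (hE m) measurable_const measurable_const).aemeasurable]
  have hcount : ∀ m : ℤ, ∫⁻ ω, (if (genMap a ω)^[n] m = 0 then (1 : ℝ≥0∞) else 0) ∂P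
      = P {ω | (genMap a ω)^[n] m = 0} := fun m => by
    simp [← lintegral_indicator_one (hE m), Set.indicator_apply]
  simp_rw [hcount]
  exact tsum_measure_genMap_iterate_eq_one a hmeas hpos hindep hident n 0
end

section
/- For every j ≥ 1 and every q ≥ 0, ℙ[ d^e_j(0) = q | 0 is successful ] = ℙ[ l_j(0) = q | 0 is successful ], where d^e_j(0) = #{m ∈ ℤ : f^j(m) = 0 and each of m, f(m), …, f^{j−1}(m) is ephemeral} is the number of direct ephemeral descendants of degree j of 0, and l_j(0) = #{m ∈ ℤ : f^j(m) = f^j(0) and f^{j−1}(m) ≠ f^{j−1}(0)} is the number of cousins of degree exactly j of 0. -/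
open MeasureTheory ProbabilityTheory Filter
open scoped ENNReal ProbabilityTheory

/-- The set of descendants (of all degrees) of `n`: `D(n) = {m : f^j(m) = n, some j ≥ 0}`. -/
def descendants {Ω : Type*} (a : ℤ → Ω → ℕ) (ω : Ω) (n : ℤ) : Set ℤ :=
  {m : ℤ | ∃ j : ℕ, (genMap a ω)^[j] m = n}

/-- `n` is ephemeral: it has finitely many descendants. -/
def Ephemeral {Ω : Type*} (a : ℤ → Ω → ℕ) (ω : Ω) (n : ℤ) : Prop :=
  (descendants a ω n).Finite

/-- The number of direct ephemeral descendants of degree `j` of `0`: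
`d^e_j(0) = #{m : f^j(m) = 0 and m, f(m), …, f^{j-1}(m) are all ephemeral}`. -/
noncomputable def directEphemeralDegree {Ω : Type*} (a : ℤ → Ω → ℕ) (ω : Ω) (j : ℕ) : ℕ :=
  Set.ncard {m : ℤ | (genMap a ω)^[j] m = 0 ∧
    ∀ k : ℕ, k < j → Ephemeral a ω ((genMap a ω)^[k] m)}

/-- The number of cousins of degree exactly `j` of `0`:
`l_j(0) = #{m : f^j(m) = f^j(0) and f^{j-1}(m) ≠ f^{j-1}(0)}`. -/
noncomputable def cousinsDegree {Ω : Type*} (a : ℤ → Ω → ℕ) (ω : Ω) (j : ℕ) : ℕ :=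
  Set.ncard {m : ℤ | (genMap a ω)^[j] m = (genMap a ω)^[j] 0 ∧
    (genMap a ω)^[j - 1] m ≠ (genMap a ω)^[j - 1] 0}

/-!
The law of `(a n)` on `ℤ → ℕ` is invariant under the shifts `x ↦ x (· + k)`, so the
mass-transport principle `∑ u, μ (F u n) = ∑ v, μ (F n v)` holds for every shift-equivariant
family of events `F u v`. Applied to "`u` is a child of `v`" it shows (Borel–Cantelli) that a.s.
every vertex has finitely many children; by König's lemma a successful vertex then has successful
descendants of every degree, and the principle applied to "`u` is a successful descendant of
degree `j` of `v`" shows that such a descendant is a.s. unique. If `k` is the unique successful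
descendant of degree `j` of `0`, the direct ephemeral descendants of degree `j` of `0` are exactly
the cousins of degree `j` of `k`. A last application of the principle, to "`u` is the sole
successful descendant of degree `j` of `v` and has `q` cousins of degree `j`", exchanges the roles
of `k` and `0`.
-/

open Function Set

namespace FamilyTree

section Combinatorics

variable {Ω : Type*} (a : ℤ → Ω → ℕ) (ω : Ω)

def IsSuccessfulDescendant (j : ℕ) (u v : ℤ) : Prop :=
  (descendants a ω u).Infinite ∧ (genMap a ω)^[j] u = v

def IsSoleSuccessfulDescendant (j : ℕ) (u v : ℤ) : Prop :=
  IsSuccessfulDescendant a ω j u v ∧ ∀ w, IsSuccessfulDescendant a ω j w v → w = u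

def SuccessfulDescendantsUnique (j : ℕ) : Prop :=
  ∀ n u w, IsSuccessfulDescendant a ω j u n → IsSuccessfulDescendant a ω j w n → w = u

def cousins (j : ℕ) (k : ℤ) : Set ℤ :=
  {m | (genMap a ω)^[j] m = (genMap a ω)^[j] k ∧
    (genMap a ω)^[j - 1] m ≠ (genMap a ω)^[j - 1] k}

theorem descendants_subset_iterate (n : ℤ) (i : ℕ) :
    descendants a ω n ⊆ descendants a ω ((genMap a ω)^[i] n) := by
  rintro m ⟨j, rfl⟩
  exact ⟨i + j, iterate_add_apply _ _ _ _⟩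

theorem descendants_subset_insert_biUnion (n : ℤ) :
    descendants a ω n ⊆ insert n (⋃ c ∈ genMap a ω ⁻¹' {n}, descendants a ω c) := by
  rintro m ⟨_ | i, hi⟩
  · exact Or.inl hi
  · refine Or.inr (mem_biUnion (x := (genMap a ω)^[i] m) ?_ ⟨i, rfl⟩)
    simpa [iterate_succ_apply'] using hi

theorem exists_child_infinite_descendants {n : ℤ} (hfin : (genMap a ω ⁻¹' {n}).Finite)
    (h : (descendants a ω n).Infinite) :
    ∃ c, genMap a ω c = n ∧ (descendants a ω c).Infinite := by
  by_contra! hc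
  exact h (((hfin.biUnion fun c hc' => hc c hc').insert n).subset
    (descendants_subset_insert_biUnion a ω n))

theorem exists_isSuccessfulDescendant (hfin : ∀ n, (genMap a ω ⁻¹' {n}).Finite) {n : ℤ}
    (h : (descendants a ω n).Infinite) (j : ℕ) : ∃ m, IsSuccessfulDescendant a ω j m n := by
  induction j with
  | zero => exact ⟨n, h, rfl⟩
  | succ j ih =>
    obtain ⟨m, hm, rfl⟩ := ih
    obtain ⟨c, rfl, hc⟩ := exists_child_infinite_descendants a ω (hfin m) hm
    exact ⟨c, hc, iterate_succ_apply _ _ _⟩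

variable {a ω} in
theorem IsSuccessfulDescendant.infinite_descendants {j : ℕ} {u v : ℤ}
    (h : IsSuccessfulDescendant a ω j u v) : (descendants a ω v).Infinite :=
  h.2 ▸ h.1.mono (descendants_subset_iterate a ω u j)

theorem setOf_directEphemeral_eq_cousins (hfin : ∀ n, (genMap a ω ⁻¹' {n}).Finite) {j : ℕ}
    (hj : 1 ≤ j) {k : ℤ} (hk : IsSoleSuccessfulDescendant a ω j k 0) :
    {m | (genMap a ω)^[j] m = 0 ∧ ∀ i : ℕ, i < j → Ephemeral a ω ((genMap a ω)^[i] m)} =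
      cousins a ω j k := by
  obtain ⟨⟨hk, hk0⟩, huniq⟩ := hk
  obtain ⟨j, rfl⟩ : ∃ i, j = i + 1 := ⟨j - 1, by omega⟩
  ext m
  simp only [mem_ofPred_eq, cousins, hk0, Nat.add_sub_cancel]
  constructor
  · rintro ⟨h0, heph⟩
    exact ⟨h0, fun he =>
      hk.mono (descendants_subset_iterate a ω k j) (he ▸ heph j j.lt_succ_self)⟩
  · rintro ⟨h0, hne⟩
    -- otherwise König's lemma gives a successful `w` with `f^j w = f^j m`, so `w ≠ k`
    have hlast : Ephemeral a ω ((genMap a ω)^[j] m) := by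
      by_contra hinf
      obtain ⟨w, hw, hwm⟩ := exists_isSuccessfulDescendant a ω hfin hinf j
      have hwk : w = k :=
        huniq w ⟨hw, by
          rw [iterate_succ_apply', hwm, ← iterate_succ_apply' (genMap a ω), h0]⟩
      exact hne (hwk ▸ hwm).symm
    refine ⟨h0, fun i hi => hlast.subset ?_⟩
    have hji : (genMap a ω)^[j] m = (genMap a ω)^[j - i] ((genMap a ω)^[i] m) := by
      rw [← iterate_add_apply, Nat.sub_add_cancel (Nat.le_of_lt_succ hi)]
    rw [hji]
    exact descendants_subset_iterate a ω _ _

theorem directEphemeralDegree_eq_ncard_cousins (hfin : ∀ n, (genMap a ω ⁻¹' {n}).Finite)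
    {j : ℕ} (hj : 1 ≤ j) {k : ℤ} (hk : IsSoleSuccessfulDescendant a ω j k 0) :
    directEphemeralDegree a ω j = (cousins a ω j k).ncard := by
  rw [directEphemeralDegree, setOf_directEphemeral_eq_cousins a ω hfin hj hk]

theorem infinite_descendants_and_directEphemeralDegree_eq_iff
    (hfin : ∀ n, (genMap a ω ⁻¹' {n}).Finite) {j : ℕ} (hj : 1 ≤ j)
    (huniq : SuccessfulDescendantsUnique a ω j)
    (q : ℕ) :
    (descendants a ω 0).Infinite ∧ directEphemeralDegree a ω j = q ↔
      ∃ u, IsSoleSuccessfulDescendant a ω j u 0 ∧ (cousins a ω j u).ncard = q := by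
  constructor
  · rintro ⟨h0, hq⟩
    obtain ⟨u, hu⟩ := exists_isSuccessfulDescendant a ω hfin h0 j
    have hsole : IsSoleSuccessfulDescendant a ω j u 0 := ⟨hu, fun w hw => huniq 0 u w hu hw⟩
    exact ⟨u, hsole, directEphemeralDegree_eq_ncard_cousins a ω hfin hj hsole ▸ hq⟩
  · rintro ⟨u, hsole, hq⟩
    exact ⟨hsole.1.infinite_descendants,
      directEphemeralDegree_eq_ncard_cousins a ω hfin hj hsole ▸ hq⟩

theorem infinite_descendants_and_cousinsDegree_eq_iff {j : ℕ}
    (huniq : SuccessfulDescendantsUnique a ω j)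
    (q : ℕ) :
    (descendants a ω 0).Infinite ∧ cousinsDegree a ω j = q ↔
      ∃ v, IsSoleSuccessfulDescendant a ω j 0 v ∧ (cousins a ω j 0).ncard = q := by
  constructor
  · rintro ⟨h0, hq⟩
    have h : IsSuccessfulDescendant a ω j 0 ((genMap a ω)^[j] 0) := ⟨h0, rfl⟩
    exact ⟨_, ⟨h, fun w hw => huniq _ 0 w h hw⟩, hq⟩
  · rintro ⟨v, hsole, hq⟩
    exact ⟨hsole.1.1, hq⟩

end Combinatorics

-- On the canonical space `ℤ → ℕ` the environment `x` itself plays the role of `n ↦ a n ω`.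
def coord (n : ℤ) (x : ℤ → ℕ) : ℕ := x n

def shift (k : ℤ) (x : ℤ → ℕ) : ℤ → ℕ := fun n => x (n + k)

section Shift

variable (k : ℤ) (x : ℤ → ℕ)

theorem genMap_shift (m : ℤ) : genMap coord (shift k x) m = genMap coord x (m + k) - k := by
  simp only [genMap, coord, shift]
  ring

theorem iterate_genMap_shift (j : ℕ) (m : ℤ) :
    (genMap coord (shift k x))^[j] m = (genMap coord x)^[j] (m + k) - k := by
  induction j generalizing m with
  | zero => simp
  | succ j ih => rw [iterate_succ_apply, iterate_succ_apply, genMap_shift, ih, sub_add_cancel]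

theorem descendants_shift (n : ℤ) :
    descendants coord (shift k x) n = (· + k) ⁻¹' descendants coord x (n + k) := by
  ext m
  simp only [descendants, mem_preimage, mem_ofPred_eq, iterate_genMap_shift]
  exact exists_congr fun j => sub_eq_iff_eq_add

theorem infinite_descendants_shift (n : ℤ) :
    (descendants coord (shift k x) n).Infinite ↔ (descendants coord x (n + k)).Infinite := by
  rw [descendants_shift]
  exact not_congr ⟨fun h => h.of_preimage (add_right_surjective k),
    fun h => h.preimage (add_left_injective k).injOn⟩

theorem isSuccessfulDescendant_shift (j : ℕ) (u v : ℤ) :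
    IsSuccessfulDescendant coord (shift k x) j u v ↔
      IsSuccessfulDescendant coord x j (u + k) (v + k) := by
  rw [IsSuccessfulDescendant, IsSuccessfulDescendant, infinite_descendants_shift,
    iterate_genMap_shift, sub_eq_iff_eq_add]

theorem isSoleSuccessfulDescendant_shift (j : ℕ) (u v : ℤ) :
    IsSoleSuccessfulDescendant coord (shift k x) j u v ↔
      IsSoleSuccessfulDescendant coord x j (u + k) (v + k) := by
  simp only [IsSoleSuccessfulDescendant, isSuccessfulDescendant_shift]
  refine and_congr_right fun _ => ⟨fun h w hw => ?_, fun h w hw => ?_⟩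
  · have := h (w - k) (by rwa [sub_add_cancel])
    omega
  · have := h (w + k) hw
    omega

theorem ncard_cousins_shift (j : ℕ) (u : ℤ) :
    (cousins coord (shift k x) j u).ncard = (cousins coord x j (u + k)).ncard := by
  have h : cousins coord (shift k x) j u = (· + k) ⁻¹' cousins coord x j (u + k) := by
    ext m
    simp only [cousins, mem_preimage, mem_ofPred_eq, iterate_genMap_shift, ne_eq, sub_left_inj]
  rw [h, ncard_preimage_of_injective_subset_range (add_left_injective k)
    (by simp [(add_right_surjective k).range_eq])]

end Shift

theorem measurable_genMap_apply {g : (ℤ → ℕ) → ℤ} (hg : Measurable g) :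
    Measurable fun x => genMap coord x (g x) := by
  have happly : Measurable fun p : ℤ × (ℤ → ℕ) => p.2 p.1 :=
    measurable_from_prod_countable_right fun n => measurable_pi_apply n
  exact hg.add <| (measurable_of_countable Nat.cast).comp (happly.comp (hg.prodMk measurable_id))

theorem measurable_iterate_genMap (j : ℕ) {g : (ℤ → ℕ) → ℤ} (hg : Measurable g) :
    Measurable fun x => (genMap coord x)^[j] (g x) := by
  induction j with
  | zero => exact hg
  | succ j ih => simpa only [iterate_succ_apply'] using measurable_genMap_apply ih

theorem measurable_descendants {g : (ℤ → ℕ) → ℤ} (hg : Measurable g) :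
    Measurable fun x => descendants coord x (g x) :=
  measurable_set_iff.2 fun _ => Measurable.exists fun j =>
    (measurable_iterate_genMap j measurable_const).eq hg

theorem measurable_finite_descendants {g : (ℤ → ℕ) → ℤ} (hg : Measurable g) :
    Measurable fun x => (descendants coord x (g x)).Finite :=
  (Countable.ofPred_finite.measurableSet.mem).comp (measurable_descendants hg)

theorem measurableSet_infinite_descendants (n : ℤ) :
    MeasurableSet {x | (descendants coord x n).Infinite} :=
  (measurable_finite_descendants measurable_const).not.setOf

theorem measurable_isSuccessfulDescendant (j : ℕ) (u v : ℤ) :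
    Measurable fun x => IsSuccessfulDescendant coord x j u v :=
  (measurable_finite_descendants measurable_const).not.and
    ((measurable_iterate_genMap j measurable_const).eq_const v)

theorem measurable_isSoleSuccessfulDescendant (j : ℕ) (u v : ℤ) :
    Measurable fun x => IsSoleSuccessfulDescendant coord x j u v :=
  (measurable_isSuccessfulDescendant j u v).and <| Measurable.forall fun w =>
    (measurable_isSuccessfulDescendant j w v).imp measurable_const

theorem measurable_ncard_cousins (j : ℕ) (u : ℤ) :
    Measurable fun x => (cousins coord x j u).ncard := by
  refine measurable_ncard.comp (measurable_set_iff.2 fun _ => ?_)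
  exact ((measurable_iterate_genMap j measurable_const).eq
    (measurable_iterate_genMap j measurable_const)).and
    ((measurable_iterate_genMap (j - 1) measurable_const).eq
      (measurable_iterate_genMap (j - 1) measurable_const)).not

theorem measurable_cousinsDegree (j : ℕ) : Measurable fun x => cousinsDegree coord x j :=
  measurable_ncard_cousins j 0

theorem measurable_directEphemeralDegree (j : ℕ) :
    Measurable fun x => directEphemeralDegree coord x j := by
  refine measurable_ncard.comp (measurable_set_iff.2 fun _ => ?_)
  exact ((measurable_iterate_genMap j measurable_const).eq_const 0).and
    (Measurable.forall fun i => Measurable.imp measurable_const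
      (measurable_finite_descendants (measurable_iterate_genMap i measurable_const)))

section Stationary

variable {μ : Measure (ℤ → ℕ)} (hμ : ∀ k, MeasurePreserving (shift k) μ μ)
include hμ

theorem mass_transport {F : ℤ → ℤ → Set (ℤ → ℕ)}
    (hFm : ∀ u v, MeasurableSet (F u v))
    (hF : ∀ u v k, shift k ⁻¹' F u v = F (u + k) (v + k)) (n : ℤ) :
    ∑' u, μ (F u n) = ∑' v, μ (F n v) := by
  have h : ∀ u, μ (F u n) = μ (F n (2 * n - u)) := fun u =>
    calc μ (F u n) = μ (shift (u - n) ⁻¹' F n (2 * n - u)) := by rw [hF]; congr 2 <;> ring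
      _ = μ (F n (2 * n - u)) := (hμ (u - n)).measure_preimage (hFm _ _).nullMeasurableSet
  simp_rw [h]
  exact (Equiv.subLeft (2 * n)).tsum_eq fun v => μ (F n v)

theorem ae_finite_preimage_genMap [IsFiniteMeasure μ] :
    ∀ᵐ x ∂μ, ∀ n, (genMap coord x ⁻¹' {n}).Finite := by
  refine ae_all_iff.2 fun n =>
    ae_finite_setOfPred_mem (s := fun u => {x | genMap coord x u = n}) ?_
  have hm : ∀ u v, MeasurableSet {x | genMap coord x u = v} := fun u v =>
    (measurable_genMap_apply measurable_const) (measurableSet_singleton v)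
  rw [mass_transport hμ hm (fun u v k => by ext x; simp [genMap_shift, sub_eq_iff_eq_add]) n,
    ← measure_iUnion (fun v w hvw => disjoint_left.2 fun x hv hw => hvw (hv.symm.trans hw))
      (hm n)]
  exact measure_ne_top μ _

theorem tsum_measure_isSuccessfulDescendant (j : ℕ) (n : ℤ) :
    ∑' u, μ {x | IsSuccessfulDescendant coord x j u n} =
      μ {x | (descendants coord x n).Infinite} := by
  have hm : ∀ u v, MeasurableSet {x | IsSuccessfulDescendant coord x j u v} := fun u v =>
    (measurable_isSuccessfulDescendant j u v).setOf
  rw [mass_transport hμ hm (fun u v k => by ext x; exact isSuccessfulDescendant_shift k x j u v) n,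
    ← measure_iUnion (fun v w hvw => disjoint_left.2 fun x hv hw => hvw (hv.2.symm.trans hw.2))
      (hm n)]
  congr 1
  ext x
  simp [IsSuccessfulDescendant]

theorem ae_successfulDescendantsUnique [IsFiniteMeasure μ] (j : ℕ) :
    ∀ᵐ x ∂μ, SuccessfulDescendantsUnique coord x j := by
  refine ae_all_iff.2 fun n => ?_
  set F : ℤ → Set (ℤ → ℕ) := fun u => {x | IsSuccessfulDescendant coord x j u n}
  set S : Set (ℤ → ℕ) := {x | (descendants coord x n).Infinite}
  have hFm : ∀ u, MeasurableSet (F u) := fun u => (measurable_isSuccessfulDescendant j u n).setOf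
  have hSm : MeasurableSet S := measurableSet_infinite_descendants n
  -- `N x` counts the successful descendants of degree `j` of `n`: König's lemma gives `N ≥ 1`
  -- on `S`, and mass transport gives `∫ N = μ S`, hence `N = 1_S` a.e.
  set N : (ℤ → ℕ) → ℝ≥0∞ := fun x => ∑' u, (F u).indicator 1 x
  have hN : ∫⁻ x, N x ∂μ = μ S := by
    rw [lintegral_tsum fun u => (measurable_one.indicator (hFm u)).aemeasurable]
    simp_rw [lintegral_indicator_one (hFm _)]
    exact tsum_measure_isSuccessfulDescendant hμ j n
  have hle : S.indicator 1 ≤ᵐ[μ] N := (ae_finite_preimage_genMap hμ).mono fun x hx => by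
    by_cases hxS : x ∈ S
    · obtain ⟨u, hu⟩ := exists_isSuccessfulDescendant coord x hx hxS j
      rw [indicator_of_mem hxS]
      exact (indicator_of_mem (s := F u) hu 1).symm.le.trans (ENNReal.le_tsum u)
    · simp [indicator_of_notMem hxS]
  have heq : S.indicator 1 =ᵐ[μ] N :=
    ae_eq_of_ae_le_of_lintegral_le hle
      (by rw [lintegral_indicator_one hSm]; exact measure_ne_top _ _)
      (Measurable.tsum fun u => measurable_one.indicator (hFm u)).aemeasurable
      (by rw [hN, lintegral_indicator_one hSm])
  filter_upwards [heq] with x hx u w hu hw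
  by_contra hne
  have h2 : 2 ≤ N x := calc
    (2 : ℝ≥0∞) = ∑ v ∈ {u, w}, (F v).indicator 1 x := by
      rw [Finset.sum_pair (Ne.symm hne), indicator_of_mem (s := F u) hu,
        indicator_of_mem (s := F w) hw]
      norm_num
    _ ≤ N x := ENNReal.sum_le_tsum _
  rw [← hx] at h2
  exact absurd (h2.trans (indicator_le_self' (fun _ _ => zero_le_one) x)) (by norm_num)

theorem measure_inter_directEphemeralDegree_eq [IsFiniteMeasure μ] {j : ℕ} (hj : 1 ≤ j)
    (q : ℕ) :
    μ ({x | (descendants coord x 0).Infinite} ∩ {x | directEphemeralDegree coord x j = q}) =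
      μ ({x | (descendants coord x 0).Infinite} ∩ {x | cousinsDegree coord x j = q}) := by
  set T : ℤ → ℤ → Set (ℤ → ℕ) := fun u v =>
    {x | IsSoleSuccessfulDescendant coord x j u v ∧ (cousins coord x j u).ncard = q}
  have hTm : ∀ u v, MeasurableSet (T u v) := fun u v =>
    ((measurable_isSoleSuccessfulDescendant j u v).and
      ((measurable_ncard_cousins j u).eq_const q)).setOf
  have hT : ∀ u v k, shift k ⁻¹' T u v = T (u + k) (v + k) := fun u v k => by
    ext x
    simp only [T, mem_preimage, mem_ofPred_eq, isSoleSuccessfulDescendant_shift,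
      ncard_cousins_shift]
  have hgood := (ae_finite_preimage_genMap hμ).and (ae_successfulDescendantsUnique hμ j)
  calc _ = μ (⋃ u, T u 0) := measure_congr <| eventuallyEq_set.2 <| hgood.mono fun x hx => by
        simp only [T, mem_inter_iff, mem_iUnion, mem_ofPred_eq]
        exact infinite_descendants_and_directEphemeralDegree_eq_iff coord x hx.1 hj hx.2 q
    _ = ∑' u, μ (T u 0) := measure_iUnion
        (fun u w huw => disjoint_left.2 fun x hu hw => huw (hw.1.2 u hu.1.1)) (hTm · 0)
    _ = ∑' v, μ (T 0 v) := mass_transport hμ hTm hT 0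
    _ = μ (⋃ v, T 0 v) := (measure_iUnion (fun v w hvw => disjoint_left.2 fun x hv hw =>
        hvw (hv.1.1.2.symm.trans hw.1.1.2)) (hTm 0)).symm
    _ = _ := measure_congr <| eventuallyEq_set.2 <| hgood.mono fun x hx => by
        simp only [T, mem_inter_iff, mem_iUnion, mem_ofPred_eq]
        exact (infinite_descendants_and_cousinsDegree_eq_iff coord x hx.2 q).symm

end Stationary

theorem measurePreserving_shift_infinitePi (ν : Measure ℕ) [IsProbabilityMeasure ν] (k : ℤ) :
    MeasurePreserving (shift k) (Measure.infinitePi fun _ : ℤ => ν)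
      (Measure.infinitePi fun _ => ν) := by
  have h : shift k = MeasurableEquiv.piCongrLeft (fun _ : ℤ => ℕ) (Equiv.subRight k) := by
    ext x n
    simp [shift, MeasurableEquiv.coe_piCongrLeft, Equiv.piCongrLeft_apply]
  rw [h]
  exact ⟨by fun_prop, Measure.infinitePi_map_piCongrLeft (fun _ : ℤ => ν) (Equiv.subRight k)⟩

theorem measurePreserving_shift_map_of_iIndepFun {Ω : Type*} [MeasurableSpace Ω] {P : Measure Ω}
    [IsProbabilityMeasure P] {a : ℤ → Ω → ℕ} (hmeas : ∀ n, Measurable (a n))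
    (hindep : iIndepFun a P) (hident : ∀ n, P.map (a n) = P.map (a 0)) (k : ℤ) :
    MeasurePreserving (shift k) (P.map fun ω n => a n ω) (P.map fun ω n => a n ω) := by
  have : IsProbabilityMeasure (P.map (a 0)) :=
    Measure.isProbabilityMeasure_map (hmeas 0).aemeasurable
  rw [hindep.map_fun_eq_infinitePi_map hmeas]
  simp_rw [hident]
  exact measurePreserving_shift_infinitePi (P.map (a 0)) k

end FamilyTree

open FamilyTree

theorem direct_ephemeral_eq_cousins_in_distribution_general
    {Ω : Type*} [MeasurableSpace Ω] (P : Measure Ω) [IsProbabilityMeasure P]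
    (a : ℤ → Ω → ℕ) (hmeas : ∀ n, Measurable (a n))
    (hindep : iIndepFun a P)
    (hident : ∀ n, Measure.map (a n) P = Measure.map (a 0) P) :
    ∀ j q : ℕ, 1 ≤ j →
      P[|{ω | (descendants a ω 0).Infinite}] {ω | directEphemeralDegree a ω j = q}
        = P[|{ω | (descendants a ω 0).Infinite}] {ω | cousinsDegree a ω j = q} := by
  intro j q hj
  set X : Ω → ℤ → ℕ := fun ω n => a n ω
  have hX : Measurable X := measurable_pi_lambda _ hmeas
  have hS := measurableSet_infinite_descendants 0
  have key := measure_inter_directEphemeralDegree_eq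
    (measurePreserving_shift_map_of_iIndepFun hmeas hindep hident) hj q
  rw [Measure.map_apply hX (hS.inter ((measurable_directEphemeralDegree j).eq_const q).setOf),
    Measure.map_apply hX (hS.inter ((measurable_cousinsDegree j).eq_const q).setOf)] at key
  have hS' : MeasurableSet {ω | (descendants a ω 0).Infinite} := hX hS
  rw [cond_apply hS', cond_apply hS']
  exact congrArg _ key

/-- For every `j ≥ 1` and every `q ≥ 0`,
`ℙ[d^e_j(0) = q | 0 successful] = ℙ[l_j(0) = q | 0 successful]`. -/
theorem direct_ephemeral_eq_cousins_in_distribution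
    {Ω : Type*} [MeasurableSpace Ω] (P : Measure Ω) [IsProbabilityMeasure P]
    (a : ℤ → Ω → ℕ) (hmeas : ∀ n, Measurable (a n)) (hpos : ∀ n ω, 1 ≤ a n ω)
    (hindep : iIndepFun a P)
    (hident : ∀ n, Measure.map (a n) P = Measure.map (a 0) P)
    (hmean : ∫⁻ ω, (a 0 ω : ℝ≥0∞) ∂P < ⊤)
    (h1 : 0 < P {ω | a 0 ω = 1}) :
    ∀ j q : ℕ, 1 ≤ j →
      P[|{ω | (descendants a ω 0).Infinite}] {ω | directEphemeralDegree a ω j = q}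
        = P[|{ω | (descendants a ω 0).Infinite}] {ω | cousinsDegree a ω j = q} :=
  direct_ephemeral_eq_cousins_in_distribution_general P a hmeas hindep hident
end
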